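/- arXiv:1411.5474 — 6 statements merged into one kernel-verified Lean document; each statement's English description precedes it below -/
import Mathlib

section
/- Let α be irrational, k ≥ 2 and 0 < l ≤ a_k, and let n be an integer with 0 < n < q_{k,l}. If ‖nα‖ < ‖q_{k,l-1}α‖, then n = m·q_{k-1} for some integer m with 1 ≤ m ≤ min(l, a_k − l + 1). -/
/-!
Write `δ_j = |q_j α - p_j|`. Because `p_j q_{j+1} - p_{j+1} q_j = ±1`, every pair of integers `(n, m)`
is `s (q_{j+1}, p_{j+1}) + t (q_j, p_j)` for integers `s, t`, and then `|nα - m| = |t δ_j - s δ_{j+1}|`.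
Take `j = k - 2`. Then `q_{k,l-1} = (l-1) q_{k-1} + q_{k-2}`, so `‖q_{k,l-1}α‖ ≤ δ_{k-2} - (l-1) δ_{k-1}`.
If `0 < n < q_{k,l}` and `t ≠ 0`, the signs of `s` and `t` force `|t δ_{k-2} - s δ_{k-1}|` to be at least
this bound. So `t = 0` and `n = s q_{k-1}`. Finally, `δ_{k-2} = a_k δ_{k-1} + δ_k` with `δ_k < δ_{k-1}`,
so `s δ_{k-1} < (a_k - l + 1) δ_{k-1} + δ_k` gives `s ≤ a_k - l + 1`.
-/

/-- The Gauss map iterates: `gaussIter α n` is the `n`-th complete quotient of `α`. -/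
noncomputable def gaussIter (α : ℝ) : ℕ → ℝ :=
  fun n => (fun x : ℝ => (Int.fract x)⁻¹)^[n] α

/-- The partial quotients of the continued fraction expansion of `α`:
`α = [cfA α 0; cfA α 1, cfA α 2, …]`. -/
noncomputable def cfA (α : ℝ) (n : ℕ) : ℤ := ⌊gaussIter α n⌋

/-- The denominators `q_k` of the convergents of `α`. -/
noncomputable def cfQ (α : ℝ) : ℕ → ℤ
  | 0 => 1
  | 1 => cfA α 1
  | (n + 2) => cfA α (n + 2) * cfQ α (n + 1) + cfQ α n

/-- The numerators `p_k` of the convergents of `α`. -/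
noncomputable def cfP (α : ℝ) : ℕ → ℤ
  | 0 => cfA α 0
  | 1 => cfA α 1 * cfA α 0 + 1
  | (n + 2) => cfA α (n + 2) * cfP α (n + 1) + cfP α n

/-- `‖x‖`, the distance from `x` to the nearest integer. -/
noncomputable def dnear (x : ℝ) : ℝ := min (Int.fract x) (1 - Int.fract x)

/-- `δ_n = |q_n α - p_n|`, see `cfQ_mul_sub_cfP`. -/
noncomputable def cfDelta (α : ℝ) (n : ℕ) : ℝ :=
  ∏ i ∈ Finset.range (n + 1), Int.fract (gaussIter α i)

theorem gaussIter_succ (α : ℝ) (n : ℕ) :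
    gaussIter α (n + 1) = (Int.fract (gaussIter α n))⁻¹ := by
  simp only [gaussIter, Function.iterate_succ_apply']

theorem fract_gaussIter_succ (α : ℝ) (n : ℕ) :
    Int.fract (gaussIter α (n + 1)) = (Int.fract (gaussIter α n))⁻¹ - cfA α (n + 1) := by
  rw [← Int.self_sub_floor, cfA, gaussIter_succ]

theorem gaussIter_irrational {α : ℝ} (hα : Irrational α) (n : ℕ) : Irrational (gaussIter α n) := by
  induction n with
  | zero => exact hα
  | succ n ih =>
    rw [gaussIter_succ, ← Int.self_sub_floor]
    exact (ih.sub_intCast _).inv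

theorem fract_gaussIter_pos {α : ℝ} (hα : Irrational α) (n : ℕ) :
    0 < Int.fract (gaussIter α n) :=
  Int.fract_pos.mpr ((gaussIter_irrational hα n).ne_int _)

theorem one_le_cfA_succ {α : ℝ} (hα : Irrational α) (n : ℕ) : 1 ≤ cfA α (n + 1) := by
  rw [cfA, Int.le_floor, gaussIter_succ, Int.cast_one,
    one_le_inv₀ (fract_gaussIter_pos hα n)]
  exact (Int.fract_lt_one _).le

theorem one_le_cfQ {α : ℝ} (hα : Irrational α) : ∀ n, 1 ≤ cfQ α n
  | 0 => le_rfl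
  | 1 => one_le_cfA_succ hα 0
  | n + 2 => by
    have := one_le_cfQ hα (n + 1)
    have := one_le_cfQ hα n
    have := one_le_cfA_succ hα (n + 1)
    simp only [cfQ]
    nlinarith

theorem cfQ_le_cfQ_succ {α : ℝ} (hα : Irrational α) : ∀ n, cfQ α n ≤ cfQ α (n + 1)
  | 0 => one_le_cfA_succ hα 0
  | n + 1 => by
    have := one_le_cfQ hα n
    have := one_le_cfQ hα (n + 1)
    have := one_le_cfA_succ hα (n + 1)
    simp only [cfQ]
    nlinarith

theorem cfDelta_pos {α : ℝ} (hα : Irrational α) (n : ℕ) : 0 < cfDelta α n :=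
  Finset.prod_pos fun i _ => fract_gaussIter_pos hα i

theorem cfDelta_succ (α : ℝ) (n : ℕ) :
    cfDelta α (n + 1) = cfDelta α n * Int.fract (gaussIter α (n + 1)) :=
  Finset.prod_range_succ _ _

theorem cfDelta_succ_lt {α : ℝ} (hα : Irrational α) (n : ℕ) :
    cfDelta α (n + 1) < cfDelta α n := by
  rw [cfDelta_succ]
  exact mul_lt_of_lt_one_right (cfDelta_pos hα n) (Int.fract_lt_one _)

theorem cfDelta_eq_cfA_mul_add {α : ℝ} (hα : Irrational α) (n : ℕ) :
    cfDelta α n = cfA α (n + 2) * cfDelta α (n + 1) + cfDelta α (n + 2) := by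
  rw [cfDelta_succ α (n + 1), fract_gaussIter_succ, cfDelta_succ α n, mul_sub,
    mul_assoc, mul_inv_cancel₀ (fract_gaussIter_pos hα (n + 1)).ne']
  ring

theorem cfQ_mul_sub_cfP {α : ℝ} (hα : Irrational α) :
    ∀ n, (cfQ α n : ℝ) * α - cfP α n = (-1) ^ n * cfDelta α n
  | 0 => by
    simp [cfQ, cfP, cfA, cfDelta, Int.self_sub_floor, gaussIter]
  | 1 => by
    have hf := fract_gaussIter_pos hα 0
    have hα0 : Int.fract (gaussIter α 0) = α - cfA α 0 := (Int.self_sub_floor α).symm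
    rw [cfDelta_succ, fract_gaussIter_succ, mul_sub, cfDelta, Finset.prod_range_one,
      mul_inv_cancel₀ hf.ne', hα0]
    simp only [cfQ, cfP]
    push_cast
    ring
  | n + 2 => by
    have h₀ := cfQ_mul_sub_cfP hα n
    have h₁ := cfQ_mul_sub_cfP hα (n + 1)
    simp only [cfQ, cfP]
    push_cast
    linear_combination (cfA α (n + 2) : ℝ) * h₁ + h₀ +
      (-1) ^ n * cfDelta_eq_cfA_mul_add hα n

theorem cfP_mul_cfQ_succ_sub (α : ℝ) :
    ∀ n, cfP α n * cfQ α (n + 1) - cfP α (n + 1) * cfQ α n = (-1) ^ (n + 1)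
  | 0 => by
    simp only [cfP, cfQ]
    ring
  | n + 1 => by
    have h := cfP_mul_cfQ_succ_sub α n
    simp only [cfP, cfQ]
    linear_combination -h

theorem exists_eq_lincomb_cfQ_cfP (α : ℝ) (j : ℕ) (n m : ℤ) :
    ∃ s t : ℤ, n = s * cfQ α (j + 1) + t * cfQ α j ∧ m = s * cfP α (j + 1) + t * cfP α j := by
  set D := cfP α j * cfQ α (j + 1) - cfP α (j + 1) * cfQ α j with hD
  have hDD : D * D = 1 := by
    rw [hD, cfP_mul_cfQ_succ_sub, ← mul_pow]
    norm_num
  exact ⟨D * (cfP α j * n - cfQ α j * m), D * (cfQ α (j + 1) * m - cfP α (j + 1) * n),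
    by linear_combination -n * hDD, by linear_combination -m * hDD⟩

theorem abs_lincomb_cfQ_mul_sub {α : ℝ} (hα : Irrational α) (j : ℕ) (s t : ℤ) :
    |((s * cfQ α (j + 1) + t * cfQ α j : ℤ) : ℝ) * α - (s * cfP α (j + 1) + t * cfP α j : ℤ)| =
      |t * cfDelta α j - s * cfDelta α (j + 1)| := by
  have h₀ := cfQ_mul_sub_cfP hα j
  have h₁ := cfQ_mul_sub_cfP hα (j + 1)
  have : ((s * cfQ α (j + 1) + t * cfQ α j : ℤ) : ℝ) * α - (s * cfP α (j + 1) + t * cfP α j : ℤ)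
      = (-1) ^ j * (t * cfDelta α j - s * cfDelta α (j + 1)) := by
    push_cast
    linear_combination (s : ℝ) * h₁ + (t : ℝ) * h₀
  rw [this, abs_mul, abs_pow, abs_neg, abs_one, one_pow, one_mul]

theorem dnear_eq_abs_sub_round (x : ℝ) : dnear x = |x - round x| :=
  (abs_sub_round_eq_min x).symm

theorem exists_dnear_mul_eq {α : ℝ} (hα : Irrational α) (j : ℕ) (n : ℤ) :
    ∃ s t : ℤ, n = s * cfQ α (j + 1) + t * cfQ α j ∧
      dnear (n * α) = |t * cfDelta α j - s * cfDelta α (j + 1)| := by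
  obtain ⟨s, t, hn, hm⟩ := exists_eq_lincomb_cfQ_cfP α j n (round (n * α : ℝ))
  refine ⟨s, t, hn, ?_⟩
  rw [dnear_eq_abs_sub_round, hm, ← abs_lincomb_cfQ_mul_sub hα, ← hn]

theorem dnear_lincomb_le {α : ℝ} (hα : Irrational α) (j : ℕ) (s t : ℤ) :
    dnear ((s * cfQ α (j + 1) + t * cfQ α j : ℤ) * α) ≤
      |t * cfDelta α j - s * cfDelta α (j + 1)| := by
  rw [dnear_eq_abs_sub_round, ← abs_lincomb_cfQ_mul_sub hα]
  exact round_le _ _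

theorem sub_mul_le_abs_of_ne_zero {q₀ q₁ l s t : ℤ} {δ₀ δ₁ : ℝ} (hq₀ : 0 ≤ q₀) (hq₁ : 0 < q₁)
    (hl : 0 ≤ l) (hδ₀ : 0 ≤ δ₀) (hδ₁ : 0 ≤ δ₁) (hpos : 0 < s * q₁ + t * q₀)
    (hlt : s * q₁ + t * q₀ < l * q₁ + q₀) (ht : t ≠ 0) :
    δ₀ - (l - 1) * δ₁ ≤ |t * δ₀ - s * δ₁| := by
  rcases ht.lt_or_gt with ht | ht
  · have hs : 0 < s := pos_of_mul_pos_left (by nlinarith) hq₁.le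
    have ht' : (t : ℝ) ≤ -1 := by exact_mod_cast Int.le_sub_one_of_lt ht
    have hs' : (1 : ℝ) ≤ s := by exact_mod_cast hs
    have hl' : (0 : ℝ) ≤ l := by exact_mod_cast hl
    calc δ₀ - (l - 1) * δ₁ ≤ -(t * δ₀ - s * δ₁) := by nlinarith
      _ ≤ |t * δ₀ - s * δ₁| := neg_le_abs _
  · have hs : s < l := by
      have : (s - l) * q₁ < 0 := by nlinarith
      linarith [neg_of_mul_neg_left this hq₁.le]
    have ht' : (1 : ℝ) ≤ t := by exact_mod_cast ht
    have hs' : (s : ℝ) ≤ l - 1 := by exact_mod_cast Int.le_sub_one_of_lt hs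
    calc δ₀ - (l - 1) * δ₁ ≤ t * δ₀ - s * δ₁ := by nlinarith
      _ ≤ |t * δ₀ - s * δ₁| := le_abs_self _

theorem cfDelta_sub_mul_cfDelta_succ {α : ℝ} (hα : Irrational α) (j : ℕ) (l : ℝ) :
    cfDelta α j - (l - 1) * cfDelta α (j + 1) =
      (cfA α (j + 2) - l + 1) * cfDelta α (j + 1) + cfDelta α (j + 2) := by
  rw [cfDelta_eq_cfA_mul_add hα j]
  ring

theorem dnear_semiconvergent_le {α : ℝ} (hα : Irrational α) (j : ℕ) {l : ℤ}
    (hl : l ≤ cfA α (j + 2)) :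
    dnear (((l - 1) * cfQ α (j + 1) + cfQ α j) * α) ≤
      cfDelta α j - (l - 1) * cfDelta α (j + 1) := by
  have hgap : 0 < cfDelta α j - (l - 1) * cfDelta α (j + 1) := by
    have hl' : (l : ℝ) ≤ cfA α (j + 2) := by exact_mod_cast hl
    rw [cfDelta_sub_mul_cfDelta_succ hα]
    nlinarith [cfDelta_pos hα (j + 1), cfDelta_pos hα (j + 2)]
  have := dnear_lincomb_le hα j (l - 1) 1
  push_cast at this
  rwa [one_mul, one_mul, abs_of_pos hgap] at this

theorem le_sub_add_one_of_mul_lt {a l s : ℤ} {δ₁ δ₂ : ℝ} (hδ₂ : 0 ≤ δ₂) (hδ₁₂ : δ₂ < δ₁)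
    (h : s * δ₁ < (a - l + 1) * δ₁ + δ₂) : s ≤ a - l + 1 := by
  have : (s : ℝ) * δ₁ < (a - l + 2) * δ₁ := by linarith
  have : (s : ℝ) < a - l + 2 := lt_of_mul_lt_mul_right this (by linarith)
  have : s < a - l + 2 := by exact_mod_cast this
  omega

/-- Let `α` be irrational, `k ≥ 2`, `0 < l ≤ a_k` and `0 < n < q_{k,l}`.
If `‖nα‖ < ‖q_{k,l-1}α‖`, then `n = m·q_{k-1}` with `1 ≤ m ≤ min l (a_k − l + 1)`. -/
theorem closest_point_is_multiple (α : ℝ) (hα : Irrational α) (k : ℕ) (hk : 2 ≤ k)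
    (l : ℤ) (hl0 : 0 < l) (hl : l ≤ cfA α k) (n : ℤ) (hn0 : 0 < n)
    (hn : n < l * cfQ α (k - 1) + cfQ α (k - 2))
    (hdist : dnear (n * α) < dnear (((l - 1) * cfQ α (k - 1) + cfQ α (k - 2)) * α)) :
    ∃ m : ℤ, n = m * cfQ α (k - 1) ∧ 1 ≤ m ∧ m ≤ min l (cfA α k - l + 1) := by
  obtain ⟨j, rfl⟩ : ∃ j, k = j + 2 := ⟨k - 2, by omega⟩
  simp only [show j + 2 - 1 = j + 1 from rfl, Nat.add_sub_cancel] at hn hdist hl ⊢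
  obtain ⟨s, t, rfl, hdn⟩ := exists_dnear_mul_eq hα j n
  have hq₁ : 0 < cfQ α (j + 1) := one_le_cfQ hα (j + 1)
  have hδ₁ := cfDelta_pos hα (j + 1)
  have hmain := hdn ▸ hdist.trans_le (dnear_semiconvergent_le hα j hl)
  obtain rfl : t = 0 := by
    by_contra ht
    exact (sub_mul_le_abs_of_ne_zero (by linarith [one_le_cfQ hα j]) hq₁ hl0.le
      (cfDelta_pos hα j).le hδ₁.le hn0 hn ht).not_gt hmain
  simp only [zero_mul, add_zero, Int.cast_zero, zero_sub, abs_neg] at hn0 hn hmain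
  have hs₁ : 0 < s := pos_of_mul_pos_left hn0 hq₁.le
  have hsl : s < l + 1 := by
    have := cfQ_le_cfQ_succ hα j
    exact lt_of_mul_lt_mul_right (by linarith) hq₁.le
  rw [abs_of_pos (by positivity), cfDelta_sub_mul_cfDelta_succ hα] at hmain
  refine ⟨s, by ring, hs₁, le_min (by omega) ?_⟩
  exact le_sub_add_one_of_mul_lt (cfDelta_pos hα (j + 2)).le (cfDelta_succ_lt hα (j + 1)) hmain
end

section
/- Every standard word s_k (k ≥ 0) of slope α is primitive. -/
/-- The standard words of slope `[0; a 1, a 2, …]`, with shifted indexing: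
`stdWord a (k+1)` is the standard word `s_k`, so `stdWord a 0 = s_{-1} = 1`,
`stdWord a 1 = s_0 = 0`, `stdWord a 2 = s_1 = 0^(a 1 - 1) 1` and
`s_k = s_{k-1}^(a k) s_{k-2}` for `k ≥ 2`. -/
def stdWord (a : ℕ → ℕ) : ℕ → List ℕ
  | 0 => [1]
  | 1 => [0]
  | 2 => List.replicate (a 1 - 1) 0 ++ [1]
  | (n + 3) => (List.replicate (a (n + 2)) (stdWord a (n + 2))).flatten ++ stdWord a (n + 1)

/-- A finite word is primitive if it is not a power `u^n` (with `n ≥ 2`) of a shorter word. -/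
def PrimitiveWord {A : Type*} (w : List A) : Prop :=
  ¬ ∃ (u : List A) (n : ℕ), 2 ≤ n ∧ w = (List.replicate n u).flatten

lemma len_flatten_rep (m : ℕ) (l : List ℕ) :
    (List.replicate m l).flatten.length = m * l.length := by
  simp [List.length_flatten]

lemma count_flatten_rep (m : ℕ) (l : List ℕ) :
    (List.replicate m l).flatten.count 1 = m * l.count 1 := by
  induction m with
  | zero => simp
  | succ n ih => simp [List.replicate_succ, List.count_append, ih, Nat.succ_mul, Nat.add_comm]

lemma stdWord_det (a : ℕ → ℕ) (ha1 : 2 ≤ a 1) (k : ℕ) :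
    ((stdWord a (k+1)).count 1 : ℤ) * (stdWord a k).length
      - ((stdWord a k).count 1 : ℤ) * (stdWord a (k+1)).length = (-1 : ℤ) ^ (k+1) := by
  induction k with
  | zero => simp [stdWord]
  | succ m ih =>
    match m with
    | 0 =>
      have h2 : stdWord a 2 = List.replicate (a 1 - 1) 0 ++ [1] := rfl
      simp [stdWord, h2, List.count_append, List.count_replicate]
    | m + 1 =>
      have h3 : stdWord a (m + 3) =
          (List.replicate (a (m + 2)) (stdWord a (m + 2))).flatten ++ stdWord a (m + 1) := rfl
      rw [show m + 1 + 1 + 1 = m + 3 from rfl, h3]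
      rw [List.count_append, List.length_append, len_flatten_rep, count_flatten_rep]
      push_cast
      rw [show ((-1 : ℤ) ^ (m + 1 + 1 + 1)) = -(-1 : ℤ) ^ (m + 1 + 1) from by ring, ← ih]
      ring

/-- Every standard word `s_k` (`k ≥ 0`) of slope `α = [0; a 1, a 2, …]` with `a 1 ≥ 2`
(and all partial quotients positive) is primitive. -/
theorem standard_word_primitive (a : ℕ → ℕ) (ha : ∀ k, 1 ≤ k → 1 ≤ a k) (ha1 : 2 ≤ a 1)
    (k : ℕ) : PrimitiveWord (stdWord a (k + 1)) := by
  rintro ⟨u, n, hn, hw⟩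
  have hD := stdWord_det a ha1 k
  have hL : ((stdWord a (k+1)).length : ℤ) = n * u.length := by
    rw [hw, len_flatten_rep]; push_cast; ring
  have hH : ((stdWord a (k+1)).count 1 : ℤ) = n * u.count 1 := by
    rw [hw, count_flatten_rep]; push_cast; ring
  have hdvd : (n : ℤ) ∣ (-1 : ℤ) ^ (k+1) := by
    rw [← hD, hH, hL]
    exact ⟨(u.count 1 : ℤ) * (stdWord a k).length
      - ((stdWord a k).count 1 : ℤ) * u.length, by ring⟩
  have hu : IsUnit ((n : ℤ)) := isUnit_of_dvd_unit hdvd ((IsUnit.neg isUnit_one).pow _)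
  rcases Int.isUnit_iff.mp hu with h | h <;> omega
end

section
/- For all k ≥ 1, the standard words satisfy s_k s_{k-1} = w·a·b and s_{k-1} s_k = w·b·a for some word w and distinct letters a, b; i.e., s_k s_{k-1} and s_{k-1} s_k differ exactly in their last two letters, which are swapped. -/
lemma comm_pow {A : Type*} (u : List A) (n : ℕ) :
    u ++ (List.replicate n u).flatten = (List.replicate n u).flatten ++ u := by
  induction n with
  | zero => simp
  | succ n ih =>
    rw [List.replicate_succ, List.flatten_cons, List.append_assoc, ← ih]

/-- For `k ≥ 1` the standard words almost commute: `s_k s_{k-1} = w·a·b` and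
`s_{k-1} s_k = w·b·a` for some word `w` and distinct letters `a ≠ b`. -/
theorem standard_words_almost_commute (a : ℕ → ℕ) (ha : ∀ k, 1 ≤ k → 1 ≤ a k)
    (ha1 : 2 ≤ a 1) (k : ℕ) (hk : 1 ≤ k) :
    ∃ (w : List ℕ) (x y : ℕ), x ≠ y ∧
      stdWord a (k + 1) ++ stdWord a k = w ++ [x, y] ∧
      stdWord a k ++ stdWord a (k + 1) = w ++ [y, x] := by
  induction k with
  | zero => omega
  | succ k ih =>
    rcases Nat.eq_or_lt_of_le hk with h1 | h1
    · -- k + 1 = 1, i.e., k = 0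
      have hk0 : k = 0 := by omega
      subst hk0
      refine ⟨List.replicate (a 1 - 1) 0, 1, 0, one_ne_zero, ?_, ?_⟩
      · simp [stdWord]
      · show [0] ++ (List.replicate (a 1 - 1) 0 ++ [1]) = List.replicate (a 1 - 1) 0 ++ [0, 1]
        have hrep : [(0:ℕ)] ++ List.replicate (a 1 - 1) 0 = List.replicate (a 1 - 1) 0 ++ [0] := by
          rw [List.singleton_append, ← List.replicate_succ, List.replicate_succ']
        rw [← List.append_assoc, hrep]
        simp
    · have hk1 : 1 ≤ k := by omega
      obtain ⟨w, x, y, hxy, h1, h2⟩ := ih hk1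
      obtain ⟨m, rfl⟩ : ∃ m, k = m + 1 := ⟨k - 1, by omega⟩
      have hdef : stdWord a (m + 3) =
          (List.replicate (a (m + 2)) (stdWord a (m + 2))).flatten ++ stdWord a (m + 1) := rfl
      refine ⟨(List.replicate (a (m + 2)) (stdWord a (m + 2))).flatten ++ w, y, x,
        hxy.symm, ?_, ?_⟩
      · rw [hdef, List.append_assoc, h2, List.append_assoc]
      · rw [hdef, ← List.append_assoc, comm_pow, List.append_assoc, h1, List.append_assoc]
end

section
/- For every k ≥ 2, the square s_k² is a prefix of s_{k+1} s_k; consequently s_k² and all squares s_{k,l}² of semistandard words (0 < l < a_k) are factors of the infinite standard Sturmian word c_α. -/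
/-- The `n`-th letter of the infinite standard Sturmian word `c_α = lim s_k`
(well defined since `s_n` is a prefix of `c_α` of length `≥ n + 1`). -/
def stdLimit (a : ℕ → ℕ) (n : ℕ) : ℕ := (stdWord a (n + 1)).getD n 0

/-- `w` is a factor of the infinite standard Sturmian word `c_α`. -/
def IsFactorOfLimit (a : ℕ → ℕ) (w : List ℕ) : Prop :=
  ∃ i : ℕ, w = (List.range w.length).map (fun j => stdLimit a (i + j))

namespace StdAux

lemma rep_flat_comm (w : List ℕ) (m : ℕ) :
    w ++ (List.replicate m w).flatten = (List.replicate m w).flatten ++ w := by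
  induction m with
  | zero => simp
  | succ n ih =>
    simp only [List.replicate_succ, List.flatten_cons, List.append_assoc]
    rw [ih]

lemma getD_prefix {u v : List ℕ} (h : u <+: v) {n : ℕ} (hn : n < u.length) :
    v.getD n 0 = u.getD n 0 := by
  obtain ⟨t, rfl⟩ := h
  exact List.getD_append _ _ _ _ hn

variable {a : ℕ → ℕ} (ha : ∀ k, 1 ≤ k → 1 ≤ a k) (ha1 : 2 ≤ a 1)

include ha ha1 in
lemma prefix_step : ∀ n, 1 ≤ n → stdWord a n <+: stdWord a (n + 1) := by
  intro n hn
  match n with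
  | 1 =>
    show stdWord a 1 <+: stdWord a 2
    have : a 1 - 1 = (a 1 - 2) + 1 := by omega
    rw [show stdWord a 2 = List.replicate (a 1 - 1) 0 ++ [1] from rfl, this,
      List.replicate_succ]
    exact ⟨List.replicate (a 1 - 2) 0 ++ [1], rfl⟩
  | (m + 2) =>
    show stdWord a (m + 2) <+: stdWord a (m + 3)
    rw [show stdWord a (m + 3) =
      (List.replicate (a (m + 2)) (stdWord a (m + 2))).flatten ++ stdWord a (m + 1) from rfl]
    have h1 : a (m + 2) = (a (m + 2) - 1) + 1 := by have := ha (m + 2) (by omega); omega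
    rw [h1, List.replicate_succ, List.flatten_cons]
    exact ⟨(List.replicate (a (m + 2) - 1) (stdWord a (m + 2))).flatten ++ stdWord a (m + 1),
      by simp [List.append_assoc]⟩

include ha ha1 in
lemma prefix_mono : ∀ m M, 1 ≤ m → m ≤ M → stdWord a m <+: stdWord a M := by
  intro m M hm hmM
  induction M with
  | zero => omega
  | succ N ih =>
    rcases Nat.lt_or_ge m (N + 1) with h | h
    · exact (ih (by omega)).trans (prefix_step ha ha1 N (by omega))
    · have : m = N + 1 := by omega
      subst this; exact List.prefix_refl _

include ha ha1 in
lemma len_ge : ∀ n, n + 1 ≤ (stdWord a (n + 1)).length := by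
  intro n
  induction n using Nat.strong_induction_on with
  | _ n ih =>
    match n with
    | 0 => simp [stdWord]
    | 1 =>
      show 2 ≤ (stdWord a 2).length
      rw [show stdWord a 2 = List.replicate (a 1 - 1) 0 ++ [1] from rfl]
      simp; omega
    | (m + 2) =>
      show m + 3 ≤ (stdWord a (m + 3)).length
      rw [show stdWord a (m + 3) =
        (List.replicate (a (m + 2)) (stdWord a (m + 2))).flatten ++ stdWord a (m + 1) from rfl]
      have h1 : m + 2 ≤ (stdWord a (m + 2)).length := ih (m + 1) (by omega)
      have h2 : m + 1 ≤ (stdWord a (m + 1)).length := ih m (by omega)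
      have h3 := ha (m + 2) (by omega)
      have h4 : (stdWord a (m + 2)).length ≤ a (m + 2) * (stdWord a (m + 2)).length :=
        Nat.le_mul_of_pos_left _ h3
      simp only [List.length_append, List.length_flatten, List.map_replicate,
        List.sum_replicate, smul_eq_mul]
      omega

include ha ha1 in
lemma limit_eq (n M : ℕ) (h : n < M) : stdLimit a n = (stdWord a M).getD n 0 := by
  have hp : stdWord a (n + 1) <+: stdWord a M :=
    prefix_mono ha ha1 (n + 1) M (by omega) (by omega)
  have hl : n < (stdWord a (n + 1)).length := by have := len_ge ha ha1 n; omega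
  rw [stdLimit, getD_prefix hp hl]

include ha ha1 in
lemma factor_of_split (M : ℕ) (p w t : List ℕ) (hM : 1 ≤ M)
    (h : stdWord a M = p ++ (w ++ t)) : IsFactorOfLimit a w := by
  refine ⟨p.length, ?_⟩
  set N := M + p.length + w.length with hN
  have hpre : stdWord a M <+: stdWord a N := prefix_mono ha ha1 M N hM (by omega)
  obtain ⟨s, hs⟩ := hpre
  apply List.ext_getElem (by simp)
  intro j hj hj'
  have hjw : j < w.length := hj
  have h1 : stdLimit a (p.length + j) = (stdWord a N).getD (p.length + j) 0 :=
    limit_eq ha ha1 _ _ (by omega)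
  have h2 : stdWord a N = p ++ w ++ (t ++ s) := by
    rw [← hs, h]; simp [List.append_assoc]
  have h3 : (stdWord a N).getD (p.length + j) 0 = w.getD j 0 := by
    rw [h2]
    rw [List.getD_append _ _ _ _ (by simp [List.length_append]; omega)]
    rw [List.getD_eq_getElem _ _ (by simp; omega), List.getD_eq_getElem _ _ hjw]
    simp [List.getElem_append_right (by omega : p.length ≤ p.length + j)]
  simp only [List.getElem_map, List.getElem_range]
  rw [h1, h3, List.getD_eq_getElem _ _ hjw]

omit ha ha1 in
lemma near_comm : ∀ n, 1 ≤ n → ∃ p x y,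
    stdWord a (n + 1) ++ stdWord a n = p ++ [x, y] ∧
    stdWord a n ++ stdWord a (n + 1) = p ++ [y, x] := by
  intro n hn
  induction n, hn using Nat.le_induction with
  | base =>
    refine ⟨List.replicate (a 1 - 1) 0, 1, 0, ?_, ?_⟩
    · rw [show stdWord a 2 = List.replicate (a 1 - 1) 0 ++ [1] from rfl,
        show stdWord a 1 = [0] from rfl]
      simp
    · rw [show stdWord a 2 = List.replicate (a 1 - 1) 0 ++ [1] from rfl,
        show stdWord a 1 = [0] from rfl]
      have h0 : (0 : ℕ) :: List.replicate (a 1 - 1) 0 = List.replicate (a 1 - 1) 0 ++ [0] := by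
        rw [← List.replicate_succ, List.replicate_succ']
      rw [← List.append_assoc, List.singleton_append, h0, List.append_assoc]
      rfl
  | succ n hn ih =>
    obtain ⟨p, x, y, h1, h2⟩ := ih
    obtain ⟨m, rfl⟩ : ∃ m, n = m + 1 := ⟨n - 1, by omega⟩
    have h1 : stdWord a (m + 2) ++ stdWord a (m + 1) = p ++ [x, y] := h1
    have h2 : stdWord a (m + 1) ++ stdWord a (m + 2) = p ++ [y, x] := h2
    have hw : stdWord a (m + 3) =
        (List.replicate (a (m + 2)) (stdWord a (m + 2))).flatten ++ stdWord a (m + 1) := rfl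
    refine ⟨(List.replicate (a (m + 2)) (stdWord a (m + 2))).flatten ++ p, y, x, ?_, ?_⟩
    · show stdWord a (m + 3) ++ stdWord a (m + 2) = _
      rw [hw, List.append_assoc, h2, ← List.append_assoc]
    · show stdWord a (m + 2) ++ stdWord a (m + 3) = _
      calc stdWord a (m + 2) ++ stdWord a (m + 3)
          = (stdWord a (m + 2) ++ (List.replicate (a (m + 2)) (stdWord a (m + 2))).flatten)
              ++ stdWord a (m + 1) := by rw [hw, ← List.append_assoc]
        _ = ((List.replicate (a (m + 2)) (stdWord a (m + 2))).flatten ++ stdWord a (m + 2))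
              ++ stdWord a (m + 1) := by rw [rep_flat_comm]
        _ = (List.replicate (a (m + 2)) (stdWord a (m + 2))).flatten ++ (p ++ [x, y]) := by
              rw [List.append_assoc, h1]
        _ = _ := by rw [← List.append_assoc]

include ha ha1 in
lemma sq_prefix (k : ℕ) (hk : 2 ≤ k) :
    (stdWord a (k + 1) ++ stdWord a (k + 1)) <+: (stdWord a (k + 2) ++ stdWord a (k + 1)) := by
  obtain ⟨j, rfl⟩ : ∃ j, k = j + 2 := ⟨k - 2, by omega⟩
  show (stdWord a (j + 3) ++ stdWord a (j + 3)) <+: (stdWord a (j + 4) ++ stdWord a (j + 3))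
  have hw : stdWord a (j + 4) =
      (List.replicate (a (j + 3)) (stdWord a (j + 3))).flatten ++ stdWord a (j + 2) := rfl
  have hA : a (j + 3) = (a (j + 3) - 1) + 1 := by have := ha (j + 3) (by omega); omega
  have key : stdWord a (j + 3) <+:
      (List.replicate (a (j + 3) - 1) (stdWord a (j + 3))).flatten ++
        (stdWord a (j + 2) ++ stdWord a (j + 3)) := by
    rcases Nat.eq_zero_or_pos (a (j + 3) - 1) with h0 | h0
    · rw [h0]
      simp only [List.replicate_zero, List.flatten_nil, List.nil_append]
      obtain ⟨p, x, y, h1, h2⟩ := near_comm (j + 2) (by omega)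
      have h1 : stdWord a (j + 3) ++ stdWord a (j + 2) = p ++ [x, y] := h1
      have h2 : stdWord a (j + 2) ++ stdWord a (j + 3) = p ++ [y, x] := h2
      have hlen2 : j + 2 ≤ (stdWord a (j + 2)).length := len_ge ha ha1 (j + 1)
      have hlenp : (stdWord a (j + 3)).length ≤ p.length := by
        have e1 : (stdWord a (j + 3)).length + (stdWord a (j + 2)).length = p.length + 2 := by
          have := congrArg List.length h1; simpa using this
        omega
      have hpp : stdWord a (j + 3) <+: p :=
        List.prefix_of_prefix_length_le ⟨stdWord a (j + 2), h1⟩ ⟨[x, y], rfl⟩ hlenp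
      rw [h2]
      exact hpp.trans ⟨[y, x], rfl⟩
    · obtain ⟨m, hm⟩ : ∃ m, a (j + 3) - 1 = m + 1 := ⟨a (j + 3) - 2, by omega⟩
      rw [hm, List.replicate_succ, List.flatten_cons, List.append_assoc]
      exact ⟨_, rfl⟩
  rw [hw, hA, List.replicate_succ, List.flatten_cons]
  obtain ⟨t, ht⟩ := key
  refine ⟨t, ?_⟩
  simp only [List.append_assoc] at ht ⊢
  rw [ht]

include ha ha1 in
lemma app_prefix (n : ℕ) (hn : 1 ≤ n) :
    stdWord a (n + 1) ++ stdWord a n <+: stdWord a (n + 2) := by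
  obtain ⟨m, rfl⟩ : ∃ m, n = m + 1 := ⟨n - 1, by omega⟩
  show stdWord a (m + 2) ++ stdWord a (m + 1) <+: stdWord a (m + 3)
  have hw : stdWord a (m + 3) =
      (List.replicate (a (m + 2)) (stdWord a (m + 2))).flatten ++ stdWord a (m + 1) := rfl
  have hA : a (m + 2) = (a (m + 2) - 1) + 1 := by have := ha (m + 2) (by omega); omega
  have key : stdWord a (m + 1) <+:
      (List.replicate (a (m + 2) - 1) (stdWord a (m + 2))).flatten ++ stdWord a (m + 1) := by
    rcases Nat.eq_zero_or_pos (a (m + 2) - 1) with h0 | h0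
    · rw [h0]; simp
    · obtain ⟨q, hq⟩ : ∃ q, a (m + 2) - 1 = q + 1 := ⟨a (m + 2) - 2, by omega⟩
      rw [hq, List.replicate_succ, List.flatten_cons, List.append_assoc]
      exact (prefix_step ha ha1 (m + 1) (by omega)).trans ⟨_, rfl⟩
  rw [hw, hA, List.replicate_succ, List.flatten_cons]
  obtain ⟨t, ht⟩ := key
  refine ⟨t, ?_⟩
  simp only [List.append_assoc] at ht ⊢
  rw [ht]

end StdAux

/-- For `k ≥ 2`, `s_k²` is a prefix of `s_{k+1} s_k`; consequently `s_k²` and all squares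
`s_{k,l}²` of semistandard words (`0 < l < a k`) are factors of `c_α`. -/
theorem standard_square_factor (a : ℕ → ℕ) (ha : ∀ k, 1 ≤ k → 1 ≤ a k) (ha1 : 2 ≤ a 1)
    (k : ℕ) (hk : 2 ≤ k) :
    (stdWord a (k + 1) ++ stdWord a (k + 1)) <+: (stdWord a (k + 2) ++ stdWord a (k + 1)) ∧
      IsFactorOfLimit a (stdWord a (k + 1) ++ stdWord a (k + 1)) ∧
      ∀ l : ℕ, 0 < l → l < a k →
        IsFactorOfLimit a
          (((List.replicate l (stdWord a k)).flatten ++ stdWord a (k - 1)) ++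
            ((List.replicate l (stdWord a k)).flatten ++ stdWord a (k - 1))) := by
  have hsq := StdAux.sq_prefix ha ha1 k hk
  have hbig : stdWord a (k + 1) ++ stdWord a (k + 1) <+: stdWord a (k + 3) :=
    hsq.trans (StdAux.app_prefix ha ha1 (k + 1) (by omega))
  refine ⟨hsq, ?_, ?_⟩
  · obtain ⟨t, ht⟩ := hbig
    exact StdAux.factor_of_split ha ha1 (k + 3) [] _ t (by omega)
      (by rw [List.nil_append]; exact ht.symm)
  · intro l hl0 hlA
    obtain ⟨j, rfl⟩ : ∃ j, k = j + 2 := ⟨k - 2, by omega⟩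
    have hlA : l < a (j + 2) := hlA
    show IsFactorOfLimit a
      (((List.replicate l (stdWord a (j + 2))).flatten ++ stdWord a (j + 1)) ++
        ((List.replicate l (stdWord a (j + 2))).flatten ++ stdWord a (j + 1)))
    have hwk : stdWord a (j + 3) =
        (List.replicate (a (j + 2)) (stdWord a (j + 2))).flatten ++ stdWord a (j + 1) := rfl
    have hsplit : (List.replicate (a (j + 2)) (stdWord a (j + 2))).flatten =
        (List.replicate (a (j + 2) - l) (stdWord a (j + 2))).flatten ++
          (List.replicate l (stdWord a (j + 2))).flatten := by
      rw [← List.flatten_append, ← List.replicate_add]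
      congr 2; omega
    have hW3 : stdWord a (j + 3) =
        (List.replicate (a (j + 2) - l) (stdWord a (j + 2))).flatten ++
          ((List.replicate l (stdWord a (j + 2))).flatten ++ stdWord a (j + 1)) := by
      rw [hwk, hsplit, List.append_assoc]
    -- u is a prefix of stdWord (j+3)
    have hu_pre : (List.replicate l (stdWord a (j + 2))).flatten ++ stdWord a (j + 1) <+:
        stdWord a (j + 3) := by
      have h1 : stdWord a (j + 1) <+:
          (List.replicate (a (j + 2) - l) (stdWord a (j + 2))).flatten ++ stdWord a (j + 1) := by
        obtain ⟨q, hq⟩ : ∃ q, a (j + 2) - l = q + 1 := ⟨a (j + 2) - l - 1, by omega⟩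
        rw [hq, List.replicate_succ, List.flatten_cons, List.append_assoc]
        exact (StdAux.prefix_step ha ha1 (j + 1) (by omega)).trans ⟨_, rfl⟩
      obtain ⟨t, ht⟩ := h1
      refine ⟨t, ?_⟩
      have hsplit2 : (List.replicate (a (j + 2)) (stdWord a (j + 2))).flatten =
          (List.replicate l (stdWord a (j + 2))).flatten ++
            (List.replicate (a (j + 2) - l) (stdWord a (j + 2))).flatten := by
        rw [← List.flatten_append, ← List.replicate_add]
        congr 2; omega
      rw [hwk, hsplit2]
      simp only [List.append_assoc] at ht ⊢
      rw [ht]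
    obtain ⟨t1, ht1⟩ := hu_pre
    have ht0' : (stdWord a (j + 3) ++ stdWord a (j + 3)) <+: stdWord a (j + 5) := hbig
    obtain ⟨t0, ht0⟩ := ht0'
    have hfinal : stdWord a (j + 5) =
        (List.replicate (a (j + 2) - l) (stdWord a (j + 2))).flatten ++
          ((((List.replicate l (stdWord a (j + 2))).flatten ++ stdWord a (j + 1)) ++
            ((List.replicate l (stdWord a (j + 2))).flatten ++ stdWord a (j + 1))) ++
            (t1 ++ t0)) := by
      have e1 : stdWord a (j + 3) ++ stdWord a (j + 3) =
          (List.replicate (a (j + 2) - l) (stdWord a (j + 2))).flatten ++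
            (((List.replicate l (stdWord a (j + 2))).flatten ++ stdWord a (j + 1)) ++
              stdWord a (j + 3)) := by
        nth_rewrite 1 [hW3]
        rw [List.append_assoc]
      have e2 : ((List.replicate l (stdWord a (j + 2))).flatten ++ stdWord a (j + 1)) ++
          stdWord a (j + 3) =
          (((List.replicate l (stdWord a (j + 2))).flatten ++ stdWord a (j + 1)) ++
            ((List.replicate l (stdWord a (j + 2))).flatten ++ stdWord a (j + 1))) ++ t1 := by
        rw [← ht1]
        simp [List.append_assoc]
      rw [← ht0, e1, e2]
      simp only [List.append_assoc]
    exact StdAux.factor_of_split ha ha1 (j + 5) _ _ (t1 ++ t0) (by omega) hfinal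
end

section
/- For a Sturmian word of slope α = [0; a_1, a_2, ...] with a_1 ≥ 2, the maximal integer power of the letter 0 occurring as a factor is 0^{a_1}; i.e., 0^{a_1} is a factor but 0^{a_1 + 1} is not. -/
/-- The `n`-th letter of the standard Sturmian word of slope `α`: the coding of the orbit
of the point `α` under rotation by `α`, with `I_0 = [0, 1-α)` coding `0` and
`I_1 = [1-α, 1)` coding `1`. -/
noncomputable def sturmianLetter (α : ℝ) (n : ℕ) : ℕ :=
  if Int.fract (((n : ℝ) + 1) * α) < 1 - α then 0 else 1

/-- The language `L(α)`: `w` is a factor of the (standard) Sturmian word of slope `α`.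
(For irrational `α` this language is the same for every Sturmian word of slope `α`.) -/
noncomputable def InLang (α : ℝ) (w : List ℕ) : Prop :=
  ∃ i : ℕ, w = (List.range w.length).map (fun j => sturmianLetter α (i + j))

/-!
Letter `n` is `0` exactly when the rotation step from `fract ((n + 1) α)` does not wrap around
`1`, so a block of `k` zeros starting at position `i` amounts to `fract ((i + 1) α) + k α < 1`.
For `A = ⌊1/α⌋ = a_1`, irrationality gives `A α < 1 < (A + 1) α`. The second inequality rules
out a block of `A + 1` zeros; a block of `A` zeros needs an orbit point in `[0, 1 - A α)`, which
exists because the multiples of an irrational number are dense modulo `1`.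
-/

lemma Irrational.exists_pos_nat_fract_mul_lt {α : ℝ} (hα : Irrational α) {ε : ℝ} (hε : 0 < ε) :
    ∃ m : ℕ, 0 < m ∧ Int.fract (m * α) < ε := by
  have hdense : DenseRange (fun n : ℕ => n • (α : AddCircle (1 : ℝ))) :=
    denseRange_zsmul_iff_nsmul.1 (AddCircle.denseRange_zsmul_coe_iff.2 (by simpa using hα))
  obtain ⟨m, x, ⟨hx0, hxε⟩, hxm⟩ := hdense.exists_mem_open
    (QuotientAddGroup.isOpenMap_coe _ isOpen_Ioo) ((Set.nonempty_Ioo.2 (lt_min hε one_pos)).image _)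
  have hx1 : x < 1 := hxε.trans_le (min_le_right _ _)
  obtain ⟨k, hk⟩ : ∃ k : ℤ, (k : ℝ) = -x + m * α := by
    simpa only [← AddCircle.coe_nsmul, nsmul_eq_mul, QuotientAddGroup.eq,
      AddSubgroup.mem_zmultiples_iff, zsmul_eq_mul, mul_one] using hxm
  have hfract : Int.fract (m * α) = x := by
    rw [Int.fract_eq_iff]
    exact ⟨hx0.le, hx1, k, by linarith⟩
  refine ⟨m, Nat.pos_of_ne_zero fun hm => ?_, hfract ▸ hxε.trans_le (min_le_left _ _)⟩
  simp only [hm, Nat.cast_zero, zero_mul, Int.fract_zero] at hfract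
  linarith

lemma Int.fract_add_of_fract_add_lt_one {R : Type*} [Ring R] [LinearOrder R]
    [IsStrictOrderedRing R] [FloorRing R] {x c : R} (hc : 0 ≤ c) (h : Int.fract x + c < 1) :
    Int.fract (x + c) = Int.fract x + c := by
  rw [Int.fract_eq_iff]
  exact ⟨add_nonneg (Int.fract_nonneg x) hc, h, ⌊x⌋, by rw [Int.fract]; abel⟩

lemma cfA_one_eq_floor_inv {α : ℝ} (h0 : 0 < α) (h1 : α < 1) : cfA α 1 = ⌊α⁻¹⌋ := by
  simp [cfA, gaussIter, Int.fract_eq_self.2 ⟨h0.le, h1⟩]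

lemma Irrational.natFloor_inv_mul_lt_one {α : ℝ} (hα : Irrational α) (h0 : 0 < α) :
    (⌊α⁻¹⌋₊ : ℝ) * α < 1 := by
  have hlt : (⌊α⁻¹⌋₊ : ℝ) < α⁻¹ :=
    (Nat.floor_le (inv_nonneg.2 h0.le)).lt_of_ne (hα.inv.ne_nat _).symm
  rwa [← lt_div_iff₀ h0, one_div]

lemma one_lt_natFloor_inv_add_one_mul {α : ℝ} (h0 : 0 < α) : 1 < ((⌊α⁻¹⌋₊ : ℝ) + 1) * α := by
  rw [← inv_lt_iff_one_lt_mul₀ h0]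
  exact Nat.lt_floor_add_one _

lemma sturmianLetter_eq_zero_iff (α : ℝ) (n : ℕ) :
    sturmianLetter α n = 0 ↔ Int.fract (((n : ℝ) + 1) * α) < 1 - α := by
  unfold sturmianLetter
  split_ifs with h <;> simp [h]

lemma forall_sturmianLetter_eq_zero_iff {α : ℝ} (hα : 0 ≤ α) (i k : ℕ) :
    (∀ j < k, sturmianLetter α (i + j) = 0) ↔ Int.fract (((i : ℝ) + 1) * α) + k * α < 1 := by
  induction k with
  | zero => simp [Int.fract_lt_one]
  | succ k ih =>
    rw [Nat.forall_lt_succ_right, ih, sturmianLetter_eq_zero_iff]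
    have hshift : ((i + k : ℕ) + 1 : ℝ) * α = ((i : ℝ) + 1) * α + k * α := by push_cast; ring
    rw [hshift]
    push_cast
    constructor
    · rintro ⟨hk, hnext⟩
      rw [Int.fract_add_of_fract_add_lt_one (by positivity) hk] at hnext
      linarith
    · intro hk
      have hk' : Int.fract (((i : ℝ) + 1) * α) + k * α < 1 := by linarith
      rw [Int.fract_add_of_fract_add_lt_one (by positivity) hk']
      exact ⟨hk', by linarith⟩

lemma inLang_replicate_zero_iff (α : ℝ) (k : ℕ) :
    InLang α (List.replicate k 0) ↔ ∃ i, ∀ j < k, sturmianLetter α (i + j) = 0 := by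
  simp only [InLang, List.length_replicate, eq_comm (a := List.replicate k 0),
    List.eq_replicate_iff, List.length_map, List.length_range, List.mem_map, List.mem_range,
    true_and, forall_exists_index, and_imp, forall_apply_eq_imp_iff₂]

/-- For a Sturmian word of slope `α = [0; a_1, a_2, …]` with `a_1 ≥ 2`, the maximal power
of the letter `0` occurring as a factor is `0^(a_1)`. -/
theorem max_zero_block (α : ℝ) (hα : Irrational α) (h0 : 0 < α) (h2 : α < 1 / 2) :
    InLang α (List.replicate (cfA α 1).toNat 0) ∧
      ¬ InLang α (List.replicate ((cfA α 1).toNat + 1) 0) := by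
  rw [cfA_one_eq_floor_inv h0 (by linarith), Int.floor_toNat]
  simp only [inLang_replicate_zero_iff, forall_sturmianLetter_eq_zero_iff h0.le]
  constructor
  · obtain ⟨m, hm, hfract⟩ :=
      hα.exists_pos_nat_fract_mul_lt (sub_pos.2 (hα.natFloor_inv_mul_lt_one h0))
    refine ⟨m - 1, ?_⟩
    rw [Nat.cast_pred hm, sub_add_cancel]
    linarith
  · rintro ⟨i, hi⟩
    have := one_lt_natFloor_inv_add_one_mul h0
    push_cast at hi
    linarith [Int.fract_nonneg (((i : ℝ) + 1) * α)]
end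

section
/- A Sturmian word of slope α has bounded fractional index (i.e., sup over nonempty factors w of sup{k ∈ ℚ : w^k ∈ L(α)} is finite) if and only if the sequence of partial quotients (a_k) of α is bounded. -/
/-- The fractional power `w^r ∈ L(α)`: for `w = uv` and `r = n + |u|/|w|`, the word
`(uv)^n u` is in `L(α)`. -/
noncomputable def FracPowInLang (α : ℝ) (w : List ℕ) (r : ℚ) : Prop :=
  ∃ (n : ℕ) (u : List ℕ), u <+: w ∧ r = n + (u.length : ℚ) / (w.length : ℚ) ∧
    InLang α ((List.replicate n w).flatten ++ u)

lemma getElem?_flatten_replicate_append {β : Type*} {w u : List β} (hu : u <+: w) (N : ℕ)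
    {j : ℕ} (hj : j < N * w.length + u.length) :
    ((List.replicate N w).flatten ++ u)[j]? = w[j % w.length]? := by
  induction N generalizing j with
  | zero =>
    rw [zero_mul, zero_add] at hj
    rw [List.replicate_zero, List.flatten_nil, List.nil_append,
      Nat.mod_eq_of_lt (hj.trans_le hu.length_le), List.getElem?_eq_getElem hj]
    exact (List.prefix_iff_getElem?.1 hu j hj).symm
  | succ N ih =>
    rw [List.replicate_succ, List.flatten_cons, List.append_assoc, List.getElem?_append]
    split_ifs with h
    · rw [Nat.mod_eq_of_lt h]
    · rw [Nat.mod_eq_sub_mod (not_lt.1 h)]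
      exact ih (by rw [Nat.succ_mul] at hj; omega)

lemma apply_mod_eq_of_add_eq {β : Type*} {f : ℕ → β} {q L : ℕ} (hq : 0 < q)
    (hper : ∀ p, p + q < L → f (p + q) = f p) {j : ℕ} (hj : j < L) : f (j % q) = f j := by
  induction j using Nat.strong_induction_on with
  | _ j ih =>
    rcases lt_or_ge j q with h | h
    · rw [Nat.mod_eq_of_lt h]
    · rw [Nat.mod_eq_sub_mod h, ih (j - q) (by omega) (by omega), ← hper (j - q) (by omega),
        Nat.sub_add_cancel h]

lemma ne_zero_and_mul_nonpos_of_mul_add_mul_eq {x y a b m : ℤ} (ha : 1 ≤ a) (hm : 1 ≤ m)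
    (hmb : m < b) (h : x * a + y * b = m) : x ≠ 0 ∧ x * y ≤ 0 := by
  refine ⟨fun hx => ?_, not_lt.1 fun hxy => ?_⟩
  · rw [hx, zero_mul, zero_add] at h
    rcases le_or_gt y 0 with hy | hy <;> nlinarith
  · rcases lt_or_gt_of_ne (left_ne_zero_of_mul hxy.ne') with hx | hx
    · nlinarith [neg_of_mul_pos_right hxy hx.le]
    · nlinarith [pos_of_mul_pos_right hxy hx.le]

lemma exists_le_lt_add_of_step_le {f : ℕ → ℝ} {a d : ℝ} {n : ℕ} (h0 : f 0 < a) (hn : a ≤ f n)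
    (hstep : ∀ i < n, f (i + 1) ≤ f i + d) : ∃ i ≤ n, a ≤ f i ∧ f i < a + d := by
  classical
  have hex : ∃ i, a ≤ f i := ⟨n, hn⟩
  have hi0 : Nat.find hex ≠ 0 := fun h => (h ▸ Nat.find_spec hex).not_gt h0
  obtain ⟨j, hj⟩ := Nat.exists_eq_succ_of_ne_zero hi0
  have hin : Nat.find hex ≤ n := Nat.find_min' hex hn
  have hfj : f j < a := not_le.1 (Nat.find_min hex (by omega))
  refine ⟨Nat.find hex, hin, Nat.find_spec hex, ?_⟩
  have := hstep j (by omega)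
  rw [hj]
  linarith

lemma exists_fract_lt_of_step_le {f : ℕ → ℝ} {d : ℝ} {n : ℕ} (hn : f n = f 0 + 1)
    (hstep : ∀ i < n, f (i + 1) ≤ f i + d) : ∃ i ≤ n, Int.fract (f i) < d := by
  obtain ⟨i, hin, hle, hlt⟩ := exists_le_lt_add_of_step_le (a := ((⌊f 0⌋ + 1 : ℤ) : ℝ))
    (by push_cast; exact Int.lt_floor_add_one _)
    (by rw [hn]; push_cast; linarith [Int.floor_le (f 0)]) hstep
  have : ⌊f 0⌋ + 1 ≤ ⌊f i⌋ := Int.le_floor.2 hle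
  have : ((⌊f 0⌋ + 1 : ℤ) : ℝ) ≤ ⌊f i⌋ := by exact_mod_cast this
  exact ⟨i, hin, by rw [← Int.self_sub_floor]; linarith⟩

lemma mem_Ico_of_fract_sub_lt {z y ℓ : ℝ} (hz0 : 0 ≤ z) (hz1 : z < 1) (hy : 0 ≤ y)
    (hyℓ : y + ℓ ≤ 1) (h : Int.fract (z - y) < ℓ) : z ∈ Set.Ico y (y + ℓ) := by
  have hℓ : 0 < ℓ := (Int.fract_nonneg _).trans_lt h
  by_cases hzy : y ≤ z
  · rw [Int.fract_eq_self.2 ⟨by linarith, by linarith⟩] at h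
    exact ⟨hzy, by linarith⟩
  · rw [← Int.fract_add_intCast _ 1, Int.fract_eq_self.2 ⟨by push_cast; linarith,
      by push_cast; linarith⟩] at h
    push_cast at h
    linarith

namespace Sturmian

noncomputable def cfP (α : ℝ) : ℕ → ℤ
  | 0 => 0
  | 1 => 1
  | (n + 2) => cfA α (n + 2) * cfP α (n + 1) + cfP α n

noncomputable def cfDiff (α : ℝ) (k : ℕ) : ℝ := cfQ α k * α - cfP α k

/-- For irrational `α ∈ (0, 1)` this is `‖q_k α‖`, the distance from `q_k α` to the nearest
integer (`cfDist_le_abs_sub`). -/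
noncomputable def cfDist (α : ℝ) (k : ℕ) : ℝ := |cfDiff α k|

noncomputable def cfQNat (α : ℝ) (k : ℕ) : ℕ := (cfQ α k).toNat

variable {α : ℝ}

lemma gaussIter_succ (k : ℕ) : gaussIter α (k + 1) = (Int.fract (gaussIter α k))⁻¹ := by
  simp only [gaussIter, Function.iterate_succ_apply']

lemma fract_gaussIter (k : ℕ) : Int.fract (gaussIter α k) = gaussIter α k - cfA α k :=
  (Int.self_sub_floor _).symm

lemma irrational_gaussIter (hα : Irrational α) (k : ℕ) : Irrational (gaussIter α k) := by
  induction k with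
  | zero => exact hα
  | succ k ih => rw [gaussIter_succ, fract_gaussIter]; exact (ih.sub_intCast _).inv

lemma fract_pos_of_irrational {x : ℝ} (hx : Irrational x) : 0 < Int.fract x :=
  Int.fract_pos.2 (hx.ne_int _)

lemma one_lt_gaussIter (hα : Irrational α) {k : ℕ} (hk : 1 ≤ k) : 1 < gaussIter α k := by
  obtain ⟨k, rfl⟩ := Nat.exists_eq_add_of_le' hk
  rw [gaussIter_succ]
  exact one_lt_inv_iff₀.2 ⟨fract_pos_of_irrational (irrational_gaussIter hα k), Int.fract_lt_one _⟩

lemma one_le_cfA (hα : Irrational α) {k : ℕ} (hk : 1 ≤ k) : 1 ≤ cfA α k :=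
  Int.le_floor.2 (by exact_mod_cast (one_lt_gaussIter hα hk).le)

lemma cfQ_add_two (k : ℕ) : cfQ α (k + 2) = cfA α (k + 2) * cfQ α (k + 1) + cfQ α k := rfl

lemma cfP_add_two (k : ℕ) : cfP α (k + 2) = cfA α (k + 2) * cfP α (k + 1) + cfP α k := rfl

lemma cfDiff_add_two (k : ℕ) :
    cfDiff α (k + 2) = cfA α (k + 2) * cfDiff α (k + 1) + cfDiff α k := by
  simp only [cfDiff, cfQ_add_two, cfP_add_two]; push_cast; ring

lemma cfQ_mul_cfP_succ_sub (k : ℕ) :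
    cfQ α k * cfP α (k + 1) - cfQ α (k + 1) * cfP α k = (-1) ^ k := by
  induction k with
  | zero => simp [cfQ, cfP]
  | succ k ih => rw [cfQ_add_two, cfP_add_two, pow_succ]; linear_combination -ih

lemma cfQ_succ_mul_cfDiff_sub (k : ℕ) :
    (cfQ α (k + 1) : ℝ) * cfDiff α k - cfQ α k * cfDiff α (k + 1) = (-1) ^ k := by
  have h : (cfQ α k : ℝ) * cfP α (k + 1) - cfQ α (k + 1) * cfP α k = (-1) ^ k := by
    exact_mod_cast cfQ_mul_cfP_succ_sub k
  simp only [cfDiff]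
  linear_combination h

section Denominators

variable (hα : Irrational α)
include hα

lemma one_le_cfQ_and_cfQ_le_succ (k : ℕ) : 1 ≤ cfQ α k ∧ cfQ α k ≤ cfQ α (k + 1) := by
  induction k with
  | zero => exact ⟨le_rfl, one_le_cfA hα le_rfl⟩
  | succ k ih =>
    have ha := one_le_cfA hα (k := k + 2) (by omega)
    refine ⟨ih.1.trans ih.2, ?_⟩
    rw [cfQ_add_two]; nlinarith

lemma one_le_cfQ (k : ℕ) : 1 ≤ cfQ α k := (one_le_cfQ_and_cfQ_le_succ hα k).1

lemma cfQ_le_cfQ_succ (k : ℕ) : cfQ α k ≤ cfQ α (k + 1) := (one_le_cfQ_and_cfQ_le_succ hα k).2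

lemma cfA_mul_cfQ_le_cfQ_succ (k : ℕ) : cfA α (k + 1) * cfQ α k ≤ cfQ α (k + 1) := by
  cases k with
  | zero => simp [cfQ]
  | succ k => rw [cfQ_add_two]; linarith [one_le_cfQ hα k]

lemma le_cfQ (k : ℕ) : (k : ℤ) ≤ cfQ α k := by
  induction k using Nat.strong_induction_on with
  | _ k ih =>
    match k with
    | 0 => simp [cfQ]
    | 1 => exact one_le_cfQ hα 1
    | k + 2 =>
      have := ih (k + 1) (by omega)
      push_cast at this ⊢
      rw [cfQ_add_two]
      nlinarith [one_le_cfA hα (k := k + 2) (by omega), one_le_cfQ hα k, one_le_cfQ hα (k + 1)]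

lemma cfQ_succ_le_of_cfA_le {M : ℤ} (hM : ∀ k, 1 ≤ k → cfA α k ≤ M) (k : ℕ) :
    cfQ α (k + 1) ≤ (M + 1) * cfQ α k := by
  cases k with
  | zero => simp only [cfQ]; linarith [hM 1 le_rfl]
  | succ k =>
    rw [cfQ_add_two]
    nlinarith [hM (k + 2) (by omega), one_le_cfQ hα (k + 1), cfQ_le_cfQ_succ hα k]

lemma cfQNat_cast (k : ℕ) : (cfQNat α k : ℤ) = cfQ α k :=
  Int.toNat_of_nonneg (by linarith [one_le_cfQ hα k])

lemma one_le_cfQNat (k : ℕ) : 1 ≤ cfQNat α k := by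
  have := cfQNat_cast hα k; have := one_le_cfQ hα k; omega

lemma exists_cfQ_le_lt {m : ℕ} (hm : 1 ≤ m) : ∃ k, cfQ α k ≤ m ∧ (m : ℤ) < cfQ α (k + 1) := by
  classical
  have hex : ∃ j, (m : ℤ) < cfQ α j :=
    ⟨m + 1, by have := le_cfQ hα (m + 1); push_cast at this; omega⟩
  have hfind : Nat.find hex ≠ 0 := fun h => by
    have := Nat.find_spec hex; rw [h] at this; simp only [cfQ] at this; omega
  obtain ⟨k, hk⟩ := Nat.exists_eq_succ_of_ne_zero hfind
  refine ⟨k, not_lt.1 (Nat.find_min hex (by omega)), ?_⟩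
  rw [← Nat.succ_eq_add_one, ← hk]
  exact Nat.find_spec hex

end Denominators

/-- The rotation by `α` seen at the times `t_i = i q_s mod q_{s+1}`: modulo `1`, each step
moves by `θ_s` or by `θ_s - θ_{s+1}`, where `θ_k = cfDiff α k`. -/
noncomputable def cfWalk (α : ℝ) (s : ℕ) (x : ℝ) (i : ℕ) : ℝ :=
  x + i * cfDiff α s - ((i * cfQNat α s / cfQNat α (s + 1) : ℕ) : ℝ) * cfDiff α (s + 1)

section Walk

variable (hα : Irrational α)
include hα

lemma fract_add_mul_eq_fract_cfWalk (s : ℕ) (x : ℝ) (i : ℕ) :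
    Int.fract (x + ((i * cfQNat α s % cfQNat α (s + 1) : ℕ) : ℝ) * α) =
      Int.fract (cfWalk α s x i) := by
  set n := cfQNat α (s + 1)
  set q := cfQNat α s
  set r := i * q / n
  have hnR : (n : ℝ) = cfQ α (s + 1) := by exact_mod_cast cfQNat_cast hα (s + 1)
  have hqR : (q : ℝ) = cfQ α s := by exact_mod_cast cfQNat_cast hα s
  have hdm : (r : ℝ) * n + ((i * q % n : ℕ) : ℝ) = i * q := by
    exact_mod_cast Nat.div_add_mod' (i * q) n
  have : x + ((i * q % n : ℕ) : ℝ) * α =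
      cfWalk α s x i + ((i * cfP α s - r * cfP α (s + 1) : ℤ) : ℝ) := by
    simp only [cfWalk, cfDiff]
    push_cast
    linear_combination α * hdm - α * (r : ℝ) * hnR + α * i * hqR
  rw [this, Int.fract_add_intCast]

lemma cfWalk_cfQNat (s : ℕ) (x : ℝ) :
    cfWalk α s x (cfQNat α (s + 1)) = cfWalk α s x 0 + (-1) ^ s := by
  have hn : 0 < cfQNat α (s + 1) := one_le_cfQNat hα (s + 1)
  have hnR : (cfQNat α (s + 1) : ℝ) = cfQ α (s + 1) := by exact_mod_cast cfQNat_cast hα (s + 1)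
  have hqR : (cfQNat α s : ℝ) = cfQ α s := by exact_mod_cast cfQNat_cast hα s
  simp only [cfWalk, Nat.mul_div_cancel_left _ hn, zero_mul, Nat.zero_div, Nat.cast_zero, hnR, hqR]
  linear_combination cfQ_succ_mul_cfDiff_sub (α := α) s

end Walk

section Approximation

variable (hα : Irrational α) (h0 : 0 < α) (h1 : α < 1)
include hα h0 h1

lemma cfDiff_succ_mul_gaussIter (k : ℕ) :
    cfDiff α (k + 1) * gaussIter α (k + 2) = -cfDiff α k := by
  induction k with
  | zero =>
    have hx1 : gaussIter α 1 = α⁻¹ := by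
      rw [gaussIter_succ]; exact congrArg _ (Int.fract_eq_self.2 ⟨h0.le, h1⟩)
    have hne : Int.fract (gaussIter α 1) ≠ 0 :=
      (fract_pos_of_irrational (irrational_gaussIter hα 1)).ne'
    have hdiff : cfDiff α 1 = -(Int.fract (gaussIter α 1) * α) := by
      rw [fract_gaussIter, hx1]; simp only [cfDiff, cfQ, cfP]; field_simp; ring
    rw [gaussIter_succ, hdiff]
    simp only [cfDiff, cfQ, cfP]
    field_simp
    ring
  | succ k ih =>
    have hx : gaussIter α (k + 3) ≠ 0 := (zero_lt_one.trans (one_lt_gaussIter hα (by omega))).ne'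
    have hmul : (gaussIter α (k + 2) - cfA α (k + 2)) * gaussIter α (k + 3) = 1 := by
      rw [← fract_gaussIter, gaussIter_succ (k + 2), mul_inv_cancel₀]
      exact (fract_pos_of_irrational (irrational_gaussIter hα _)).ne'
    rw [cfDiff_add_two]
    linear_combination gaussIter α (k + 3) * ih - cfDiff α (k + 1) * hmul

lemma neg_one_pow_mul_cfDiff_pos (k : ℕ) : 0 < (-1) ^ k * cfDiff α k := by
  induction k with
  | zero => simpa [cfDiff, cfQ, cfP] using h0
  | succ k ih =>
    have hx := zero_lt_one.trans (one_lt_gaussIter hα (k := k + 2) (by omega))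
    have h : (-1) ^ (k + 1) * cfDiff α (k + 1) * gaussIter α (k + 2) = (-1) ^ k * cfDiff α k := by
      rw [mul_assoc, cfDiff_succ_mul_gaussIter hα h0 h1, pow_succ]; ring
    exact pos_of_mul_pos_left (h ▸ ih) hx.le

lemma cfDist_eq (k : ℕ) : cfDist α k = (-1) ^ k * cfDiff α k := by
  rw [← abs_of_pos (neg_one_pow_mul_cfDiff_pos hα h0 h1 k), abs_mul, abs_pow, abs_neg, abs_one,
    one_pow, one_mul, cfDist]

lemma cfDist_pos (k : ℕ) : 0 < cfDist α k :=
  cfDist_eq hα h0 h1 k ▸ neg_one_pow_mul_cfDiff_pos hα h0 h1 k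

lemma cfDist_succ_lt (k : ℕ) : cfDist α (k + 1) < cfDist α k := by
  have hx := one_lt_gaussIter hα (k := k + 2) (by omega)
  have h : cfDist α (k + 1) * gaussIter α (k + 2) = cfDist α k := by
    rw [cfDist, cfDist, ← abs_neg (cfDiff α k), ← cfDiff_succ_mul_gaussIter hα h0 h1 k, abs_mul,
      abs_of_pos (zero_lt_one.trans hx)]
  nlinarith [cfDist_pos hα h0 h1 (k + 1)]

lemma cfQ_succ_mul_cfDist_add (k : ℕ) :
    (cfQ α (k + 1) : ℝ) * cfDist α k + cfQ α k * cfDist α (k + 1) = 1 := by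
  have hsq : ((-1 : ℝ) ^ k) ^ 2 = 1 := by rw [← pow_mul, mul_comm, pow_mul]; norm_num
  rw [cfDist_eq hα h0 h1, cfDist_eq hα h0 h1, pow_succ]
  linear_combination (-1 : ℝ) ^ k * cfQ_succ_mul_cfDiff_sub k + hsq

lemma cfQ_succ_mul_cfDist_le_one (k : ℕ) : (cfQ α (k + 1) : ℝ) * cfDist α k ≤ 1 := by
  have := cfQ_succ_mul_cfDist_add hα h0 h1 k
  have : (1 : ℝ) ≤ cfQ α k := by exact_mod_cast one_le_cfQ hα k
  nlinarith [cfDist_pos hα h0 h1 (k + 1)]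

lemma one_le_cfQ_add_mul_cfDist (k : ℕ) :
    1 ≤ ((cfQ α k : ℝ) + cfQ α (k + 1)) * cfDist α k := by
  have := cfQ_succ_mul_cfDist_add hα h0 h1 k
  have : (1 : ℝ) ≤ cfQ α k := by exact_mod_cast one_le_cfQ hα k
  nlinarith [cfDist_succ_lt hα h0 h1 k]

lemma succ_mul_cfDist_le_one (k : ℕ) : ((k : ℝ) + 1) * cfDist α k ≤ 1 := by
  have : ((k + 1 : ℕ) : ℝ) ≤ cfQ α (k + 1) := by exact_mod_cast le_cfQ hα (k + 1)
  push_cast at this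
  nlinarith [cfQ_succ_mul_cfDist_le_one hα h0 h1 k, cfDist_pos hα h0 h1 k]

lemma cfDiff_mul_cfDiff_succ_neg (k : ℕ) : cfDiff α k * cfDiff α (k + 1) < 0 := by
  have := mul_pos (neg_one_pow_mul_cfDiff_pos hα h0 h1 k)
    (neg_one_pow_mul_cfDiff_pos hα h0 h1 (k + 1))
  have hs : ((-1 : ℝ) ^ k * (-1) ^ (k + 1)) = -1 := by
    rw [← pow_add, show k + (k + 1) = 2 * k + 1 by ring, pow_succ, pow_mul]; norm_num
  nlinarith

lemma cfDist_le_abs_sub (k : ℕ) {m : ℤ} (p : ℤ) (hm : 1 ≤ m) (hmq : m < cfQ α (k + 1)) :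
    cfDist α k ≤ |m * α - p| := by
  -- coordinates of `(m, p)` in the unimodular basis `(q_k, p_k), (q_{k+1}, p_{k+1})`
  set x : ℤ := (-1) ^ k * (m * cfP α (k + 1) - p * cfQ α (k + 1))
  set y : ℤ := (-1) ^ k * (p * cfQ α k - m * cfP α k)
  have hdet := cfQ_mul_cfP_succ_sub (α := α) k
  have hsq : ((-1 : ℤ) ^ k) ^ 2 = 1 := by rw [← pow_mul, mul_comm, pow_mul]; norm_num
  have hxq : x * cfQ α k + y * cfQ α (k + 1) = m := by
    linear_combination ((-1 : ℤ) ^ k * m) * hdet + m * hsq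
  have hxp : (x : ℝ) * cfP α k + y * cfP α (k + 1) = p := by
    exact_mod_cast (by linear_combination ((-1 : ℤ) ^ k * p) * hdet + p * hsq :
      x * cfP α k + y * cfP α (k + 1) = p)
  have hval : m * α - p = x * cfDiff α k + y * cfDiff α (k + 1) := by
    have hxqR : (x : ℝ) * cfQ α k + y * cfQ α (k + 1) = m := by exact_mod_cast hxq
    simp only [cfDiff]
    linear_combination hxp - α * hxqR
  obtain ⟨hx, hxy⟩ := ne_zero_and_mul_nonpos_of_mul_add_mul_eq (one_le_cfQ hα k) hm hmq hxq
  have hθ := (cfDiff_mul_cfDiff_succ_neg hα h0 h1 k).le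
  have hsame : 0 ≤ x * cfDiff α k * (y * cfDiff α (k + 1)) := by
    have hxyR : (x : ℝ) * y ≤ 0 := by exact_mod_cast hxy
    nlinarith [mul_nonneg_of_nonpos_of_nonpos hxyR hθ]
  have hx1 : (1 : ℝ) ≤ |(x : ℝ)| := by exact_mod_cast Int.one_le_abs hx
  calc cfDist α k ≤ |(x : ℝ)| * cfDist α k := le_mul_of_one_le_left (abs_nonneg _) hx1
    _ = |x * cfDiff α k| := (abs_mul _ _).symm
    _ ≤ |x * cfDiff α k| + |y * cfDiff α (k + 1)| := le_add_of_nonneg_right (abs_nonneg _)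
    _ = |m * α - p| := by
      rw [hval, (abs_add_eq_add_abs_iff _ _).2 (mul_nonneg_iff.1 hsame)]

lemma cfDist_le_fract_mul (k : ℕ) {n : ℕ} (hn : 1 ≤ n) (hnq : (n : ℤ) < cfQ α (k + 1)) :
    cfDist α k ≤ Int.fract (n * α) := by
  have h := cfDist_le_abs_sub hα h0 h1 k ⌊(n : ℝ) * α⌋ (m := n) (by exact_mod_cast hn) hnq
  rwa [Int.cast_natCast, Int.self_sub_floor, abs_of_nonneg (Int.fract_nonneg _)] at h

lemma fract_mul_lt_one_sub_cfDist (k : ℕ) (hk : 0 < cfDiff α k) {n : ℕ} (hn : 1 ≤ n)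
    (hnq : (n : ℤ) < cfQ α (k + 1)) : Int.fract (n * α) < 1 - cfDist α k := by
  have h := cfDist_le_abs_sub hα h0 h1 k (⌊(n : ℝ) * α⌋ + 1) (m := n) (by exact_mod_cast hn) hnq
  have hfr : (n : ℝ) * α - ((⌊(n : ℝ) * α⌋ + 1 : ℤ) : ℝ) = Int.fract ((n : ℝ) * α) - 1 := by
    rw [← Int.self_sub_floor ((n : ℝ) * α)]; push_cast; ring
  rw [Int.cast_natCast, hfr, abs_of_nonpos (by linarith [Int.fract_lt_one ((n : ℝ) * α)])] at h
  refine lt_of_le_of_ne (by linarith) fun heq => ?_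
  -- equality would make `(n + q_k) α` an integer
  have hint : (((n + cfQ α k : ℤ)) : ℝ) * α = ((⌊(n : ℝ) * α⌋ + 1 + cfP α k : ℤ) : ℝ) := by
    rw [cfDist, abs_of_pos hk, ← Int.self_sub_floor ((n : ℝ) * α)] at heq
    simp only [cfDiff] at heq
    push_cast
    linear_combination heq
  exact (hα.intCast_mul (by linarith [one_le_cfQ hα k])).ne_int _ hint

lemma neg_one_pow_mul_cfWalk_succ_sub_le (s : ℕ) (x : ℝ) (i : ℕ) :
    (-1) ^ s * (cfWalk α s x (i + 1) - cfWalk α s x i) ≤ cfDist α s + cfDist α (s + 1) := by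
  unfold cfWalk
  set n := cfQNat α (s + 1)
  set q := cfQNat α s
  have hn : 0 < n := one_le_cfQNat hα (s + 1)
  have hqn : q ≤ n := Int.toNat_le_toNat (cfQ_le_cfQ_succ hα s)
  have hr : (i + 1) * q / n = i * q / n ∨ (i + 1) * q / n = i * q / n + 1 := by
    have hle : i * q / n ≤ (i + 1) * q / n := Nat.div_le_div_right (by nlinarith)
    have hge : (i + 1) * q / n ≤ i * q / n + 1 := by
      calc (i + 1) * q / n ≤ (i * q + n) / n := Nat.div_le_div_right (by rw [Nat.succ_mul]; omega)
        _ = i * q / n + 1 := Nat.add_div_right _ hn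
    omega
  have hσ0 : (-1) ^ s * cfDiff α s = cfDist α s := (cfDist_eq hα h0 h1 s).symm
  have hσ1 : (-1) ^ s * cfDiff α (s + 1) = -cfDist α (s + 1) := by
    rw [cfDist_eq hα h0 h1, pow_succ]; ring
  have := (cfDist_pos hα h0 h1 (s + 1)).le
  rcases hr with h | h
  · rw [h]; push_cast; linear_combination hσ0 + this
  · rw [h]; push_cast; linear_combination hσ0 - hσ1

lemma exists_fract_add_mul_lt (s : ℕ) (x : ℝ) :
    ∃ t < cfQNat α (s + 1), Int.fract (x + t * α) < cfDist α s + cfDist α (s + 1) := by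
  set n := cfQNat α (s + 1)
  have hn : 0 < n := one_le_cfQNat hα (s + 1)
  have hstep := neg_one_pow_mul_cfWalk_succ_sub_le hα h0 h1 s x
  have hend : cfWalk α s x n = cfWalk α s x 0 + (-1) ^ s := cfWalk_cfQNat hα s x
  rcases neg_one_pow_eq_or ℝ s with hσ | hσ
  · obtain ⟨i, -, hi⟩ := exists_fract_lt_of_step_le (f := cfWalk α s x) (n := n)
      (d := cfDist α s + cfDist α (s + 1)) (by rw [hend, hσ])
      fun i _ => by linarith [hσ ▸ hstep i]
    exact ⟨_, Nat.mod_lt _ hn, (fract_add_mul_eq_fract_cfWalk hα s x i).trans_lt hi⟩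
  · -- the walk goes backwards: run it in reverse
    obtain ⟨i, -, hi⟩ := exists_fract_lt_of_step_le (f := fun i => cfWalk α s x (n - i)) (n := n)
      (d := cfDist α s + cfDist α (s + 1))
      (by simp only [Nat.sub_self, Nat.sub_zero, hend, hσ]; ring)
      fun i hi => by
        have := hσ ▸ hstep (n - (i + 1))
        rw [show n - (i + 1) + 1 = n - i by omega] at this
        linarith
    exact ⟨_, Nat.mod_lt _ hn, (fract_add_mul_eq_fract_cfWalk hα s x (n - i)).trans_lt hi⟩

end Approximation

noncomputable def window (α : ℝ) (i L : ℕ) : List ℕ :=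
  (List.range L).map fun j => sturmianLetter α (i + j)

lemma length_window (i L : ℕ) : (window α i L).length = L := by simp [window]

lemma getElem?_window {i L j : ℕ} (hj : j < L) :
    (window α i L)[j]? = some (sturmianLetter α (i + j)) := by
  simp [window, hj]

lemma inLang_window (i L : ℕ) : InLang α (window α i L) :=
  ⟨i, by rw [length_window]; rfl⟩

lemma flatten_replicate_window {i q N : ℕ} (hq : 0 < q)
    (hper : ∀ p, p + q < N * q → sturmianLetter α (i + (p + q)) = sturmianLetter α (i + p)) :
    (List.replicate N (window α i q)).flatten = window α i (N * q) := by
  refine List.ext_getElem? fun j => ?_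
  rcases lt_or_ge j (N * q) with hj | hj
  · have h := getElem?_flatten_replicate_append (List.nil_prefix (l := window α i q)) N
      (j := j) (by rw [length_window]; simpa using hj)
    rw [List.append_nil, length_window, getElem?_window (Nat.mod_lt j hq)] at h
    rw [h, getElem?_window hj, apply_mod_eq_of_add_eq (f := fun p => sturmianLetter α (i + p))
      hq hper hj]
  · rw [List.getElem?_eq_none (by simpa [length_window] using hj),
      List.getElem?_eq_none (by rw [length_window]; exact hj)]

lemma exists_sturmianLetter_add_eq {w u : List ℕ} (hu : u <+: w) {N : ℕ}
    (h : InLang α ((List.replicate N w).flatten ++ u)) :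
    ∃ i, ∀ j, j + w.length < N * w.length + u.length →
      sturmianLetter α (i + j + w.length) = sturmianLetter α (i + j) := by
  obtain ⟨i, hi⟩ := h
  have hlen : ((List.replicate N w).flatten ++ u).length = N * w.length + u.length := by
    simp
  have hletter : ∀ j, j < N * w.length + u.length →
      some (sturmianLetter α (i + j)) = w[j % w.length]? := by
    intro j hj
    rw [← getElem?_flatten_replicate_append hu N hj, hi]
    simp [hlen, hj]
  refine ⟨i, fun j hj => Option.some_injective _ ?_⟩
  rw [add_assoc, hletter _ hj, hletter j (by omega), Nat.add_mod_right]

lemma sturmianLetter_eq_iff (p p' : ℕ) :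
    sturmianLetter α p = sturmianLetter α p' ↔
      (Int.fract (((p : ℝ) + 1) * α) < 1 - α ↔ Int.fract (((p' : ℝ) + 1) * α) < 1 - α) := by
  unfold sturmianLetter
  by_cases h : Int.fract (((p : ℝ) + 1) * α) < 1 - α <;>
    by_cases h' : Int.fract (((p' : ℝ) + 1) * α) < 1 - α <;> simp [h, h']

lemma fract_orbit_add (p m : ℕ) (R : ℤ) :
    Int.fract ((((p + m : ℕ) : ℝ) + 1) * α) =
      Int.fract (Int.fract (((p : ℝ) + 1) * α) + (m * α - R)) := by
  have h : (((p + m : ℕ) : ℝ) + 1) * α = Int.fract (((p : ℝ) + 1) * α) + (m * α - R) +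
      ((⌊((p : ℝ) + 1) * α⌋ + R : ℤ) : ℝ) := by
    rw [← Int.self_sub_floor (((p : ℝ) + 1) * α)]; push_cast; ring
  rw [h, Int.fract_add_intCast]

section PrefixPeriod

variable (hα : Irrational α) (h0 : 0 < α) (h1 : α < 1)
include hα h0 h1

/-- Adding `q_k` moves the orbit point by `θ_k`, and changes its letter only if the point lies
within `‖q_k α‖` of `1 - α`; one rotation step later that would put it within `‖q_k α‖` of `0`,
which best approximation forbids before time `q_{k+1}`. -/
lemma sturmianLetter_add_cfQNat (k p : ℕ) (hp : (p : ℤ) + 2 < cfQ α (k + 1)) :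
    sturmianLetter α (p + cfQNat α k) = sturmianLetter α p := by
  set z := Int.fract (((p : ℝ) + 1) * α)
  have hz1 : z < 1 := Int.fract_lt_one _
  have hz : Int.fract (((p + 1 : ℕ) : ℝ) * α) = z := by push_cast; rfl
  have hz' : Int.fract (((p + 2 : ℕ) : ℝ) * α) = Int.fract (z + α) := by
    have := fract_orbit_add (α := α) p 1 0
    push_cast at this ⊢
    rw [show (p : ℝ) + 2 = p + 1 + 1 by ring, this, one_mul, sub_zero]
  have hshift : Int.fract ((((p + cfQNat α k : ℕ) : ℝ) + 1) * α) = Int.fract (z + cfDiff α k) := by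
    rw [fract_orbit_add p (cfQNat α k) (cfP α k), cfDiff]
    congr 4
    exact_mod_cast cfQNat_cast hα k
  have hp1 : ((p + 1 : ℕ) : ℤ) < cfQ α (k + 1) := by push_cast; linarith
  have hp2 : ((p + 2 : ℕ) : ℤ) < cfQ α (k + 1) := by push_cast; linarith
  rw [sturmianLetter_eq_iff, hshift]
  have hθ0 : cfDiff α k ≠ 0 := fun h => (cfDist_pos hα h0 h1 k).ne' (by simp [cfDist, h])
  rcases lt_or_gt_of_ne hθ0 with hθ | hθ
  · have hη : cfDist α k = -cfDiff α k := abs_of_neg hθ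
    have hlow := hz ▸ cfDist_le_fract_mul hα h0 h1 k (by omega) hp1
    have hlow' := hz' ▸ cfDist_le_fract_mul hα h0 h1 k (by omega) hp2
    rw [Int.fract_eq_self.2 ⟨by linarith, by linarith⟩]
    refine ⟨fun h => not_le.1 fun hz1α => ?_, fun h => by linarith⟩
    rw [← Int.fract_sub_intCast _ 1, Int.fract_eq_self.2 ⟨by push_cast; linarith,
      by push_cast; linarith⟩] at hlow'
    push_cast at hlow'
    linarith
  · have hη : cfDist α k = cfDiff α k := abs_of_pos hθ
    have hup := hz ▸ fract_mul_lt_one_sub_cfDist hα h0 h1 k hθ (by omega) hp1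
    have hup' := hz' ▸ fract_mul_lt_one_sub_cfDist hα h0 h1 k hθ (by omega) hp2
    rw [Int.fract_eq_self.2 ⟨by linarith [Int.fract_nonneg (((p : ℝ) + 1) * α)], by linarith⟩]
    refine ⟨fun h => by linarith, fun h => not_le.1 fun hzθ => ?_⟩
    rw [Int.fract_eq_self.2 ⟨by linarith [Int.fract_nonneg (((p : ℝ) + 1) * α)],
      by linarith⟩] at hup'
    linarith

lemma fracPowInLang_window_cfQNat (k : ℕ) :
    FracPowInLang α (window α 0 (cfQNat α k)) (cfA α (k + 1) - 1) := by
  set q := cfQNat α k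
  have hq : 1 ≤ q := one_le_cfQNat hα k
  have hqZ : (q : ℤ) = cfQ α k := cfQNat_cast hα k
  have hN : ((cfA α (k + 1) - 1).toNat : ℤ) = cfA α (k + 1) - 1 :=
    Int.toNat_of_nonneg (by linarith [one_le_cfA hα (k := k + 1) (by omega)])
  refine ⟨(cfA α (k + 1) - 1).toNat, [], List.nil_prefix, ?_, ?_⟩
  · rw [List.length_nil, Nat.cast_zero, zero_div, add_zero]
    exact_mod_cast hN.symm
  rw [List.append_nil, flatten_replicate_window hq fun p hp => ?_]
  · exact inLang_window 0 _
  rw [zero_add, zero_add, sturmianLetter_add_cfQNat hα h0 h1 k p]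
  have hp' : ((p + q : ℕ) : ℤ) < ((cfA α (k + 1) - 1).toNat * q : ℕ) := by exact_mod_cast hp
  push_cast at hp'
  rw [hN, hqZ] at hp'
  nlinarith [cfA_mul_cfQ_le_cfQ_succ hα k, one_le_cfQ hα k]

lemma cfA_le_of_fracPow_le {B : ℚ}
    (hB : ∀ w : List ℕ, w ≠ [] → InLang α w → ∀ r : ℚ, FracPowInLang α w r → r ≤ B)
    {k : ℕ} (hk : 1 ≤ k) : cfA α k ≤ ⌈B⌉ + 1 := by
  obtain ⟨k, rfl⟩ := Nat.exists_eq_add_of_le' hk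
  have hw : window α 0 (cfQNat α k) ≠ [] := by
    rw [← List.length_pos_iff, length_window]; exact one_le_cfQNat hα k
  have h := (hB _ hw (inLang_window 0 _) _ (fracPowInLang_window_cfQNat hα h0 h1 k)).trans
    (Int.le_ceil B)
  have : cfA α (k + 1) - 1 ≤ ⌈B⌉ := by exact_mod_cast h
  omega

end PrefixPeriod

lemma exists_Ico_mismatch (h0 : 0 < α) (h1 : α < 1) {δ : ℝ} (hδ : δ ≠ 0) (hδ2 : |δ| ≤ 1 / 2) :
    ∃ y, 0 ≤ y ∧ y + min |δ| (min α (1 - α)) ≤ 1 ∧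
      ∀ z ∈ Set.Ico y (y + min |δ| (min α (1 - α))), ¬ (z < 1 - α ↔ Int.fract (z + δ) < 1 - α) := by
  set ℓ := min |δ| (min α (1 - α))
  have hℓδ : ℓ ≤ |δ| := min_le_left _ _
  have hℓα : ℓ ≤ α := (min_le_right _ _).trans (min_le_left _ _)
  have hℓα' : ℓ ≤ 1 - α := (min_le_right _ _).trans (min_le_right _ _)
  rcases lt_or_gt_of_ne hδ with hneg | hpos
  · rw [abs_of_neg hneg] at hℓδ hδ2
    obtain ⟨hb1, hb2⟩ : max (1 - α) (-δ) + ℓ ≤ 1 ∧ max (1 - α) (-δ) + ℓ ≤ 1 - α - δ := by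
      rcases max_cases (1 - α) (-δ) with ⟨h, -⟩ | ⟨h, -⟩ <;> rw [h] <;> constructor <;> linarith
    refine ⟨max (1 - α) (-δ), by positivity, hb1, fun z ⟨hyz, hzy⟩ h => ?_⟩
    have hfr : Int.fract (z + δ) = z + δ :=
      Int.fract_eq_self.2 ⟨by linarith [le_max_right (1 - α) (-δ)], by linarith⟩
    linarith [le_max_left (1 - α) (-δ), h.2 (by rw [hfr]; linarith)]
  · rw [abs_of_pos hpos] at hℓδ hδ2
    obtain ⟨hb1, hb2⟩ : max 0 (1 - α - δ) + ℓ ≤ 1 - α ∧ max 0 (1 - α - δ) + ℓ ≤ 1 - δ := by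
      rcases max_cases 0 (1 - α - δ) with ⟨h, -⟩ | ⟨h, -⟩ <;> rw [h] <;> constructor <;> linarith
    refine ⟨max 0 (1 - α - δ), le_max_left _ _, by linarith, fun z ⟨hyz, hzy⟩ h => ?_⟩
    have hfr : Int.fract (z + δ) = z + δ :=
      Int.fract_eq_self.2 ⟨by linarith [le_max_left 0 (1 - α - δ)], by linarith⟩
    linarith [le_max_right 0 (1 - α - δ), hfr ▸ h.1 (by linarith)]

section BoundedPartialQuotients

variable (hα : Irrational α) (h0 : 0 < α) (h1 : α < 1)
include hα h0 h1

lemma lt_cfQNat_of_forall_notMem (s : ℕ) (x : ℝ) {y ℓ : ℝ} (hy : 0 ≤ y) (hyℓ : y + ℓ ≤ 1)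
    (hs : cfDist α s + cfDist α (s + 1) ≤ ℓ) {T : ℕ}
    (havoid : ∀ t < T, Int.fract (x + t * α) ∉ Set.Ico y (y + ℓ)) :
    T < cfQNat α (s + 1) := by
  obtain ⟨t, ht, hlt⟩ := exists_fract_add_mul_lt hα h0 h1 s (x - y)
  refine lt_of_not_ge fun hT => havoid t (ht.trans_le hT) (mem_Ico_of_fract_sub_lt
    (Int.fract_nonneg _) (Int.fract_lt_one _) hy hyℓ ?_)
  have : Int.fract (x + t * α) - y = x - y + t * α - ⌊x + t * α⌋ := by
    rw [← Int.self_sub_floor]; ring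
  rw [this, Int.fract_sub_intCast]
  exact hlt.trans_le hs

lemma exists_cfDist_add_le {M : ℤ} (hM : ∀ k, 1 ≤ k → cfA α k ≤ M) {ℓ : ℝ} (hℓ0 : 0 < ℓ)
    (hℓ1 : ℓ ≤ 1) :
    ∃ s, cfDist α s + cfDist α (s + 1) ≤ ℓ ∧ (cfQ α (s + 1) : ℝ) * ℓ ≤ 2 * (M + 1) := by
  classical
  have hex : ∃ s, cfDist α s + cfDist α (s + 1) ≤ ℓ := by
    obtain ⟨n, hn⟩ := exists_nat_gt (2 / ℓ)
    have hnℓ : 2 < n * ℓ := (div_lt_iff₀ hℓ0).1 hn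
    refine ⟨n, ?_⟩
    nlinarith [succ_mul_cfDist_le_one hα h0 h1 n, cfDist_succ_lt hα h0 h1 n,
      cfDist_pos hα h0 h1 n]
  have hM1 : (1 : ℝ) ≤ M := by exact_mod_cast (one_le_cfA hα le_rfl).trans (hM 1 le_rfl)
  refine ⟨Nat.find hex, Nat.find_spec hex, ?_⟩
  -- minimality of `s` gives `‖q_{s-1} α‖ > ℓ / 2`, hence `q_s ℓ < 2`
  rcases Nat.eq_zero_or_eq_succ_pred (Nat.find hex) with hs | hs
  · have : (cfQ α 1 : ℝ) ≤ M := by exact_mod_cast hM 1 le_rfl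
    rw [hs]
    nlinarith
  · set s := (Nat.find hex).pred
    have hmin : ℓ < cfDist α s + cfDist α (s + 1) :=
      not_le.1 (Nat.find_min hex (by omega))
    have hq : (cfQ α (s + 1) : ℝ) * ℓ < 2 := by
      nlinarith [cfQ_succ_mul_cfDist_le_one hα h0 h1 s, cfDist_succ_lt hα h0 h1 s,
        (by exact_mod_cast one_le_cfQ hα (s + 1) : (1 : ℝ) ≤ cfQ α (s + 1))]
    have hgrow : (cfQ α (s + 2) : ℝ) ≤ (M + 1) * cfQ α (s + 1) := by
      exact_mod_cast cfQ_succ_le_of_cfA_le hα hM (s + 1)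
    rw [hs]
    nlinarith

lemma inv_le_mul_abs_sub_round {M : ℤ} (hM : ∀ k, 1 ≤ k → cfA α k ≤ M) {m : ℕ} (hm : 1 ≤ m) :
    1 / ((M : ℝ) + 2) ≤ m * |m * α - round ((m : ℝ) * α)| := by
  obtain ⟨k, hkm, hmk⟩ := exists_cfQ_le_lt hα hm
  have hbest := cfDist_le_abs_sub hα h0 h1 k (round ((m : ℝ) * α)) (by exact_mod_cast hm) hmk
  rw [Int.cast_natCast] at hbest
  have hkm : (cfQ α k : ℝ) ≤ m := by exact_mod_cast hkm
  have hgrow : (cfQ α (k + 1) : ℝ) ≤ (M + 1) * cfQ α k := by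
    exact_mod_cast cfQ_succ_le_of_cfA_le hα hM k
  have hM1 : (1 : ℝ) ≤ M := by exact_mod_cast (one_le_cfA hα le_rfl).trans (hM 1 le_rfl)
  have hq : (1 : ℝ) ≤ cfQ α k := by exact_mod_cast one_le_cfQ hα k
  rw [div_le_iff₀ (by linarith)]
  calc (1 : ℝ) ≤ ((cfQ α k : ℝ) + cfQ α (k + 1)) * cfDist α k :=
        one_le_cfQ_add_mul_cfDist hα h0 h1 k
    _ ≤ (M + 2) * m * cfDist α k := by
      gcongr
      · exact (cfDist_pos hα h0 h1 k).le
      · nlinarith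
    _ ≤ (M + 2) * m * |m * α - round ((m : ℝ) * α)| := by gcongr
    _ = _ := by ring

lemma mul_lt_of_sturmianLetter_add_eq {M : ℤ} (hM : ∀ k, 1 ≤ k → cfA α k ≤ M) {m i T : ℕ}
    (hm : 1 ≤ m) (hper : ∀ j < T, sturmianLetter α (i + j + m) = sturmianLetter α (i + j)) :
    (T : ℝ) * min (1 / ((M : ℝ) + 2)) (min α (1 - α)) < 2 * (M + 1) * m := by
  set δ := (m : ℝ) * α - round ((m : ℝ) * α)
  have hδ : δ ≠ 0 :=
    sub_ne_zero.2 ((hα.natCast_mul (by omega)).ne_int _)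
  set ℓ := min |δ| (min α (1 - α))
  have hℓ0 : 0 < ℓ := lt_min (abs_pos.2 hδ) (lt_min h0 (by linarith))
  have hℓ1 : ℓ ≤ 1 := (min_le_left _ _).trans ((abs_sub_round _).trans (by norm_num))
  obtain ⟨y, hy, hyℓ, hmis⟩ := exists_Ico_mismatch h0 h1 hδ (abs_sub_round _)
  obtain ⟨s, hs, hqs⟩ := exists_cfDist_add_le hα h0 h1 hM hℓ0 hℓ1
  -- the orbit points where the letter repeats `m` steps later avoid the arc `[y, y + ℓ)`
  have hT : T < cfQNat α (s + 1) := by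
    refine lt_cfQNat_of_forall_notMem hα h0 h1 s (((i : ℝ) + 1) * α) hy hyℓ hs
      fun t ht hmem => ?_
    have hiff := (sturmianLetter_eq_iff (i + t + m) (i + t)).1 (hper t ht)
    rw [fract_orbit_add (i + t) m (round ((m : ℝ) * α))] at hiff
    rw [show ((i : ℝ) + 1) * α + t * α = (((i + t : ℕ) : ℝ) + 1) * α by push_cast; ring] at hmem
    exact hmis _ hmem hiff.symm
  have hmℓ : min (1 / ((M : ℝ) + 2)) (min α (1 - α)) ≤ m * ℓ := by
    rcases min_cases |δ| (min α (1 - α)) with ⟨h, -⟩ | ⟨h, -⟩ <;> simp only [ℓ, h]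
    · exact (min_le_left _ _).trans (inv_le_mul_abs_sub_round hα h0 h1 hM hm)
    · exact (min_le_right _ _).trans
        (le_mul_of_one_le_left (lt_min h0 (by linarith)).le (by exact_mod_cast hm))
  have hTq : (T : ℝ) < cfQ α (s + 1) := by
    rw [← cfQNat_cast hα]; exact_mod_cast hT
  have hm0 : (0 : ℝ) < m := by exact_mod_cast hm
  calc (T : ℝ) * min (1 / ((M : ℝ) + 2)) (min α (1 - α)) ≤ T * (m * ℓ) := by gcongr
    _ = m * (T * ℓ) := by ring
    _ < m * (cfQ α (s + 1) * ℓ) := by gcongr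
    _ ≤ m * (2 * (M + 1)) := by gcongr
    _ = 2 * (M + 1) * m := by ring

lemma fracPow_lt_of_cfA_le {M : ℤ} (hM : ∀ k, 1 ≤ k → cfA α k ≤ M) {w : List ℕ} (hw : w ≠ [])
    {r : ℚ} (hr : FracPowInLang α w r) :
    (r : ℝ) < 2 * (M + 1) / min (1 / ((M : ℝ) + 2)) (min α (1 - α)) + 2 := by
  obtain ⟨N, u, hu, rfl, hpow⟩ := hr
  obtain ⟨i, hper⟩ := exists_sturmianLetter_add_eq hu hpow
  have hm : 1 ≤ w.length := List.length_pos_iff.2 hw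
  have hM1 : (1 : ℝ) ≤ M := by exact_mod_cast (one_le_cfA hα le_rfl).trans (hM 1 le_rfl)
  set c := min (1 / ((M : ℝ) + 2)) (min α (1 - α))
  have hc : 0 < c := lt_min (by positivity) (lt_min h0 (by linarith))
  have hT := mul_lt_of_sturmianLetter_add_eq hα h0 h1 hM hm (i := i)
    (T := N * w.length + u.length - w.length) fun j hj => hper j (by omega)
  have hTge : ((N : ℝ) - 1) * w.length ≤ ((N * w.length + u.length - w.length : ℕ) : ℝ) := by
    have : N * w.length + u.length ≤ (N * w.length + u.length - w.length) + w.length := by omega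
    have : (N : ℝ) * w.length + u.length ≤ ((N * w.length + u.length - w.length : ℕ) : ℝ) +
        w.length := by exact_mod_cast this
    nlinarith [(Nat.cast_nonneg u.length : (0 : ℝ) ≤ u.length)]
  have hN : ((N : ℝ) - 1) * c < 2 * (M + 1) := by
    have hm0 : (0 : ℝ) < w.length := by exact_mod_cast hm
    refine lt_of_mul_lt_mul_right (a := (w.length : ℝ)) ?_ hm0.le
    nlinarith
  have hu1 : (u.length : ℝ) / w.length ≤ 1 :=
    div_le_one_of_le₀ (by exact_mod_cast hu.length_le) (Nat.cast_nonneg _)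
  push_cast
  have := (lt_div_iff₀ hc).2 hN
  linarith

end BoundedPartialQuotients

end Sturmian

/-- A Sturmian word of slope `α` has bounded fractional index iff the partial quotients
of `α` are bounded. -/
theorem bounded_index_iff_bounded_partial_quotients (α : ℝ) (hα : Irrational α)
    (h0 : 0 < α) (h1 : α < 1) :
    (∃ B : ℚ, ∀ w : List ℕ, w ≠ [] → InLang α w → ∀ r : ℚ, FracPowInLang α w r → r ≤ B) ↔
      (∃ M : ℤ, ∀ k : ℕ, 1 ≤ k → cfA α k ≤ M) := by
  constructor
  · rintro ⟨B, hB⟩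
    exact ⟨⌈B⌉ + 1, fun k hk => Sturmian.cfA_le_of_fracPow_le hα h0 h1 hB hk⟩
  · rintro ⟨M, hM⟩
    obtain ⟨B, hB⟩ := exists_rat_gt (2 * (M + 1) / min (1 / ((M : ℝ) + 2)) (min α (1 - α)) + 2)
    exact ⟨B, fun w hw _ r hr => by
      exact_mod_cast ((Sturmian.fracPow_lt_of_cfA_le hα h0 h1 hM hw hr).trans hB).le⟩
end
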